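/- arXiv:1512.08204 — 12 statements merged into one kernel-verified Lean document; each statement's English description precedes it below -/
import Mathlib

section
/- Let Θ be a convex bounded subset of the open positive orthant in R^d. Then the function w ↦ sqrt(inf over θ in Θ of Σ_{i=1}^d w_i²/θ_i) defines a norm on R^d. -/
noncomputable def thetaNorm {d : ℕ} (Θ : Set (Fin d → ℝ)) (w : Fin d → ℝ) : ℝ :=
  Real.sqrt (⨅ θ : Θ, ∑ i, w i ^ 2 / (θ : Fin d → ℝ) i)

/-!
Write `Q_θ(w) = ∑ i, w i ^ 2 / θ i`, so that `‖w‖_Θ = √(inf_{θ ∈ Θ} Q_θ(w))`.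
Homogeneity is clear since `Q_θ(a • w) = a² Q_θ(w)`, and definiteness holds because
`Θ` is bounded above (coordinatewise) by some `M`, whence `Q_θ(w) ≥ w j ^ 2 / M j` for every `θ ∈ Θ`.
For the triangle inequality, let `Q_{θ₁}(v) ≤ α²` and `Q_{θ₂}(w) ≤ β²`. Sedrakyan's
inequality `(x + y)² / (p + q) ≤ x² / p + y² / q`, applied coordinatewise to the convex
combination `θ = (α θ₁ + β θ₂) / (α + β) ∈ Θ`, gives `Q_θ(v + w) ≤ (α + β)²`.
-/

open Finset

section WeightedSqSum

variable {ι : Type*} [Fintype ι]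

noncomputable def weightedSqSum (θ w : ι → ℝ) : ℝ := ∑ i, w i ^ 2 / θ i

lemma add_sq_div_add_le {x y p q : ℝ} (hp : 0 < p) (hq : 0 < q) :
    (x + y) ^ 2 / (p + q) ≤ x ^ 2 / p + y ^ 2 / q := by
  simpa [Fin.sum_univ_two] using
    sq_sum_div_le_sum_sq_div univ ![x, y] (g := ![p, q]) (by simp [Fin.forall_fin_two, hp, hq])

lemma weightedSqSum_smul (θ w : ι → ℝ) (a : ℝ) :
    weightedSqSum θ (a • w) = a ^ 2 * weightedSqSum θ w := by
  simp only [weightedSqSum, mul_sum, Pi.smul_apply, smul_eq_mul, mul_pow, mul_div_assoc]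

lemma sq_div_le_weightedSqSum {θ : ι → ℝ} (hθ : ∀ i, 0 ≤ θ i) (w : ι → ℝ) (j : ι) :
    w j ^ 2 / θ j ≤ weightedSqSum θ w :=
  single_le_sum (f := fun i ↦ w i ^ 2 / θ i) (fun i _ ↦ div_nonneg (sq_nonneg _) (hθ i))
    (mem_univ j)

lemma weightedSqSum_nonneg {θ : ι → ℝ} (hθ : ∀ i, 0 ≤ θ i) (w : ι → ℝ) :
    0 ≤ weightedSqSum θ w :=
  sum_nonneg fun i _ ↦ div_nonneg (sq_nonneg _) (hθ i)

lemma weightedSqSum_add_le {θ₁ θ₂ : ι → ℝ} (hθ₁ : ∀ i, 0 < θ₁ i) (hθ₂ : ∀ i, 0 < θ₂ i)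
    {s t : ℝ} (hs : 0 < s) (ht : 0 < t) (v w : ι → ℝ) :
    weightedSqSum (s • θ₁ + t • θ₂) (v + w) ≤ weightedSqSum θ₁ v / s + weightedSqSum θ₂ w / t := by
  simp only [weightedSqSum, sum_div, ← sum_add_distrib]
  refine sum_le_sum fun i _ ↦ ?_
  simpa only [Pi.add_apply, Pi.smul_apply, smul_eq_mul, div_div, mul_comm s, mul_comm t] using
    add_sq_div_add_le (x := v i) (y := w i) (mul_pos hs (hθ₁ i)) (mul_pos ht (hθ₂ i))

end WeightedSqSum

section ThetaNorm

variable {d : ℕ}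

lemma thetaNorm_eq_sqrt_iInf (Θ : Set (Fin d → ℝ)) (w : Fin d → ℝ) :
    thetaNorm Θ w = √(⨅ θ : Θ, weightedSqSum (θ : Fin d → ℝ) w) :=
  rfl

lemma thetaNorm_smul (Θ : Set (Fin d → ℝ)) (a : ℝ) (w : Fin d → ℝ) :
    thetaNorm Θ (a • w) = |a| * thetaNorm Θ w := by
  simp only [thetaNorm_eq_sqrt_iInf, weightedSqSum_smul, ← Real.mul_iInf_of_nonneg (sq_nonneg a),
    Real.sqrt_mul (sq_nonneg a), Real.sqrt_sq_eq_abs]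

lemma thetaNorm_zero (Θ : Set (Fin d → ℝ)) : thetaNorm Θ 0 = 0 := by
  simpa using thetaNorm_smul Θ 0 0

variable {Θ : Set (Fin d → ℝ)} (hpos : ∀ θ ∈ Θ, ∀ i, 0 < θ i)
include hpos

lemma bddBelow_range_weightedSqSum (w : Fin d → ℝ) :
    BddBelow (Set.range fun θ : Θ ↦ weightedSqSum (θ : Fin d → ℝ) w) :=
  ⟨0, by rintro _ ⟨θ, rfl⟩; exact weightedSqSum_nonneg (fun i ↦ (hpos θ θ.2 i).le) w⟩

lemma thetaNorm_le_sqrt_weightedSqSum {θ : Fin d → ℝ} (hθ : θ ∈ Θ) (w : Fin d → ℝ) :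
    thetaNorm Θ w ≤ √(weightedSqSum θ w) :=
  Real.sqrt_le_sqrt (ciInf_le (bddBelow_range_weightedSqSum hpos w) ⟨θ, hθ⟩)

lemma thetaNorm_eq_iInf_sqrt (hne : Θ.Nonempty) (w : Fin d → ℝ) :
    thetaNorm Θ w = ⨅ θ : Θ, √(weightedSqSum (θ : Fin d → ℝ) w) :=
  have := hne.to_subtype
  Real.sqrt_monotone.map_ciInf_of_continuousAt Real.continuous_sqrt.continuousAt
    (bddBelow_range_weightedSqSum hpos w)

lemma eq_zero_of_thetaNorm_eq_zero (hne : Θ.Nonempty) (hbdd : Bornology.IsBounded Θ)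
    {w : Fin d → ℝ} (hw : thetaNorm Θ w = 0) : w = 0 := by
  have := hne.to_subtype
  obtain ⟨M, hM⟩ := hbdd.bddAbove
  obtain ⟨θ₀, hθ₀⟩ := hne
  have hinf : ⨅ θ : Θ, weightedSqSum (θ : Fin d → ℝ) w ≤ 0 := Real.sqrt_eq_zero'.mp hw
  funext j
  have hMj : 0 < M j := (hpos θ₀ hθ₀ j).trans_le (hM hθ₀ j)
  have hlower : w j ^ 2 / M j ≤ ⨅ θ : Θ, weightedSqSum (θ : Fin d → ℝ) w :=
    le_ciInf fun θ ↦ (div_le_div_of_nonneg_left (sq_nonneg _) (hpos θ θ.2 j) (hM θ.2 j)).trans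
      (sq_div_le_weightedSqSum (fun i ↦ (hpos θ θ.2 i).le) w j)
  have hsq : w j ^ 2 ≤ 0 := by simpa using (div_le_iff₀ hMj).mp (hlower.trans hinf)
  exact pow_eq_zero_iff two_ne_zero |>.mp (hsq.antisymm (sq_nonneg _))

lemma thetaNorm_add_le_of_le_sq (hconv : Convex ℝ Θ) {θ₁ θ₂ : Fin d → ℝ} (hθ₁ : θ₁ ∈ Θ)
    (hθ₂ : θ₂ ∈ Θ) {α β : ℝ} (hα : 0 < α) (hβ : 0 < β) {v w : Fin d → ℝ}
    (hv : weightedSqSum θ₁ v ≤ α ^ 2) (hw : weightedSqSum θ₂ w ≤ β ^ 2) :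
    thetaNorm Θ (v + w) ≤ α + β := by
  have hαβ : 0 < α + β := add_pos hα hβ
  set s := α / (α + β) with hs_def
  set t := β / (α + β) with ht_def
  have hs : 0 < s := div_pos hα hαβ
  have ht : 0 < t := div_pos hβ hαβ
  have hθ : s • θ₁ + t • θ₂ ∈ Θ := hconv hθ₁ hθ₂ hs.le ht.le (by rw [hs_def, ht_def]; field_simp)
  calc thetaNorm Θ (v + w)
      ≤ √(weightedSqSum (s • θ₁ + t • θ₂) (v + w)) := thetaNorm_le_sqrt_weightedSqSum hpos hθ _
    _ ≤ √(α ^ 2 / s + β ^ 2 / t) := by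
        gcongr
        exact (weightedSqSum_add_le (hpos _ hθ₁) (hpos _ hθ₂) hs ht v w).trans
          (add_le_add (div_le_div_of_nonneg_right hv hs.le) (div_le_div_of_nonneg_right hw ht.le))
    _ = α + β := by
        rw [show α ^ 2 / s + β ^ 2 / t = (α + β) ^ 2 by rw [hs_def, ht_def]; field_simp]
        exact Real.sqrt_sq hαβ.le

lemma thetaNorm_add_le_sqrt_add_sqrt (hconv : Convex ℝ Θ) {θ₁ θ₂ : Fin d → ℝ} (hθ₁ : θ₁ ∈ Θ)
    (hθ₂ : θ₂ ∈ Θ) (v w : Fin d → ℝ) :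
    thetaNorm Θ (v + w) ≤ √(weightedSqSum θ₁ v) + √(weightedSqSum θ₂ w) := by
  refine le_of_forall_pos_le_add fun ε hε ↦ ?_
  have hle {x : ℝ} (hx : 0 ≤ x) : x ≤ (√x + ε / 2) ^ 2 :=
    (Real.sqrt_le_left (by positivity)).mp (by linarith)
  have := thetaNorm_add_le_of_le_sq hpos hconv hθ₁ hθ₂ (by positivity) (by positivity)
    (hle (weightedSqSum_nonneg (fun i ↦ (hpos _ hθ₁ i).le) v))
    (hle (weightedSqSum_nonneg (fun i ↦ (hpos _ hθ₂ i).le) w))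
  linarith

lemma thetaNorm_add_le (hne : Θ.Nonempty) (hconv : Convex ℝ Θ) (v w : Fin d → ℝ) :
    thetaNorm Θ (v + w) ≤ thetaNorm Θ v + thetaNorm Θ w := by
  have := hne.to_subtype
  rw [thetaNorm_eq_iInf_sqrt hpos hne v, thetaNorm_eq_iInf_sqrt hpos hne w]
  exact le_ciInf_add_ciInf fun θ₁ θ₂ ↦
    thetaNorm_add_le_sqrt_add_sqrt hpos hconv θ₁.2 θ₂.2 v w

end ThetaNorm

theorem theta_norm_is_norm {d : ℕ} (Θ : Set (Fin d → ℝ)) (hne : Θ.Nonempty)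
    (hconv : Convex ℝ Θ) (hbdd : Bornology.IsBounded Θ)
    (hpos : ∀ θ ∈ Θ, ∀ i, 0 < θ i) :
    (∀ w, thetaNorm Θ w = 0 ↔ w = 0) ∧
    (∀ (a : ℝ) (w : Fin d → ℝ), thetaNorm Θ (a • w) = |a| * thetaNorm Θ w) ∧
    (∀ v w : Fin d → ℝ, thetaNorm Θ (v + w) ≤ thetaNorm Θ v + thetaNorm Θ w) :=
  ⟨fun _ ↦ ⟨eq_zero_of_thetaNorm_eq_zero hpos hne hbdd, fun h ↦ h ▸ thetaNorm_zero Θ⟩,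
    thetaNorm_smul Θ, thetaNorm_add_le hpos hne hconv⟩
end

section
/- Let Θ be a convex bounded subset of the open positive orthant in R^d. The dual norm of the Θ-norm ‖w‖_Θ = sqrt(inf_{θ∈Θ} Σ_i w_i²/θ_i) is given by ‖u‖_{*,Θ} = sqrt(sup_{θ∈Θ} Σ_i θ_i u_i²). -/
/-!
For each `θ ∈ Θ`, weighted Cauchy–Schwarz gives
`(∑ uᵢ wᵢ)² ≤ (∑ θᵢ uᵢ²) (∑ wᵢ² / θᵢ)`, with equality at `wᵢ ∝ θᵢ uᵢ`. Bounding the first factor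
by its supremum `M` over `Θ` and then taking the infimum of the second over `Θ` shows that
`⟨u, w⟩ ≤ √M` whenever `‖w‖_Θ ≤ 1`; conversely the equality cases, normalised so that
`∑ wᵢ² / θᵢ ≤ 1`, attain `√(∑ θᵢ uᵢ²)` for every `θ ∈ Θ`, so `√M` is the least upper bound.
-/

open Bornology Finset Set

theorem Bornology.IsBounded.bddAbove_range_sum_mul {ι : Type*} [Fintype ι] {Θ : Set (ι → ℝ)}
    (hΘ : IsBounded Θ) (v : ι → ℝ) :
    BddAbove (range fun θ : Θ => ∑ i, (θ : ι → ℝ) i * v i) := by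
  let L : (ι → ℝ) →L[ℝ] ℝ := ∑ i, v i • ContinuousLinearMap.proj i
  have hL : ⇑L = fun θ => ∑ i, θ i * v i := funext fun θ => by simp [L, mul_comm]
  rw [← image_eq_range (fun θ => ∑ i, θ i * v i) Θ, ← hL]
  exact (L.lipschitz.isBounded_image hΘ).bddAbove

section Weighted

variable {ι : Type*} (s : Finset ι) {θ : ι → ℝ}

theorem Finset.sq_sum_mul_le_sum_mul_sq_mul_sum_sq_div (hθ : ∀ i ∈ s, 0 < θ i)
    (u w : ι → ℝ) :
    (∑ i ∈ s, u i * w i) ^ 2 ≤ (∑ i ∈ s, θ i * u i ^ 2) * ∑ i ∈ s, w i ^ 2 / θ i := by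
  refine sum_sq_le_sum_mul_sum_of_sq_le_mul s
    (fun i hi => mul_nonneg (hθ i hi).le (sq_nonneg _))
    (fun i hi => div_nonneg (sq_nonneg _) (hθ i hi).le) fun i hi => le_of_eq ?_
  field_simp [(hθ i hi).ne']

theorem Finset.exists_sum_sq_div_le_one_and_sum_mul_eq_sqrt (hθ : ∀ i ∈ s, 0 < θ i)
    (u : ι → ℝ) :
    ∃ w : ι → ℝ, ∑ i ∈ s, w i ^ 2 / θ i ≤ 1 ∧
      ∑ i ∈ s, u i * w i = √(∑ i ∈ s, θ i * u i ^ 2) := by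
  set c := √(∑ i ∈ s, θ i * u i ^ 2)
  have hc : c ^ 2 = ∑ i ∈ s, θ i * u i ^ 2 :=
    Real.sq_sqrt (sum_nonneg fun i hi => mul_nonneg (hθ i hi).le (sq_nonneg _))
  -- if `c = 0` then `x / 0 = 0` makes `w = 0`, which still works
  refine ⟨fun i => θ i * u i / c, ?_, ?_⟩
  · calc ∑ i ∈ s, (θ i * u i / c) ^ 2 / θ i = (∑ i ∈ s, θ i * u i ^ 2) / c ^ 2 := by
          rw [sum_div]
          refine sum_congr rfl fun i hi => ?_
          field_simp [(hθ i hi).ne']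
      _ ≤ 1 := by rw [hc]; exact div_self_le_one _
  · calc ∑ i ∈ s, u i * (θ i * u i / c) = (∑ i ∈ s, θ i * u i ^ 2) / c := by
          rw [sum_div]
          exact sum_congr rfl fun i _ => by ring
      _ = c := Real.div_sqrt

end Weighted

section ThetaNorm

variable {d : ℕ} {Θ : Set (Fin d → ℝ)}

def thetaNormPairings (Θ : Set (Fin d → ℝ)) (u : Fin d → ℝ) : Set ℝ :=
  {x | ∃ w : Fin d → ℝ, thetaNorm Θ w ≤ 1 ∧ x = ∑ i, u i * w i}

theorem sum_mul_le_sqrt_iSup_of_thetaNorm_le_one (hpos : ∀ θ ∈ Θ, ∀ i, 0 < θ i)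
    (u : Fin d → ℝ) (hne : Θ.Nonempty)
    (hbdd : BddAbove (range fun θ : Θ => ∑ i, (θ : Fin d → ℝ) i * u i ^ 2))
    {w : Fin d → ℝ} (hw : thetaNorm Θ w ≤ 1) :
    ∑ i, u i * w i ≤ √(⨆ θ : Θ, ∑ i, (θ : Fin d → ℝ) i * u i ^ 2) := by
  have := hne.to_subtype
  set M := ⨆ θ : Θ, ∑ i, (θ : Fin d → ℝ) i * u i ^ 2
  have hM : 0 ≤ M := Real.iSup_nonneg fun θ =>
    sum_nonneg fun i _ => mul_nonneg (hpos θ θ.2 i).le (sq_nonneg _)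
  refine (le_abs_self _).trans (Real.abs_le_sqrt ?_)
  calc (∑ i, u i * w i) ^ 2 ≤ M * ⨅ θ : Θ, ∑ i, w i ^ 2 / (θ : Fin d → ℝ) i := by
        rw [Real.mul_iInf_of_nonneg hM]
        refine le_ciInf fun θ => ?_
        calc (∑ i, u i * w i) ^ 2
            ≤ (∑ i, (θ : Fin d → ℝ) i * u i ^ 2) *
                ∑ i, w i ^ 2 / (θ : Fin d → ℝ) i :=
              univ.sq_sum_mul_le_sum_mul_sq_mul_sum_sq_div (fun i _ => hpos θ θ.2 i) u w
          _ ≤ M * ∑ i, w i ^ 2 / (θ : Fin d → ℝ) i := by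
              gcongr
              · exact sum_nonneg fun i _ => div_nonneg (sq_nonneg _) (hpos θ θ.2 i).le
              · exact le_ciSup hbdd θ
    _ ≤ M := mul_le_of_le_one_right hM (Real.sqrt_le_one.1 hw)

theorem sqrt_sum_mul_sq_mem_thetaNormPairings (hpos : ∀ θ ∈ Θ, ∀ i, 0 < θ i)
    (u : Fin d → ℝ) {θ : Fin d → ℝ} (hθ : θ ∈ Θ) :
    √(∑ i, θ i * u i ^ 2) ∈ thetaNormPairings Θ u := by
  obtain ⟨w, hw, hsum⟩ :=
    univ.exists_sum_sq_div_le_one_and_sum_mul_eq_sqrt (fun i _ => hpos θ hθ i) u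
  refine ⟨w, Real.sqrt_le_one.2 ((ciInf_le ?_ ⟨θ, hθ⟩).trans hw), hsum.symm⟩
  exact ⟨0, forall_mem_range.2 fun θ' =>
    sum_nonneg fun i _ => div_nonneg (sq_nonneg _) (hpos θ' θ'.2 i).le⟩

theorem isLUB_thetaNormPairings (hpos : ∀ θ ∈ Θ, ∀ i, 0 < θ i) (u : Fin d → ℝ)
    (hne : Θ.Nonempty)
    (hbdd : BddAbove (range fun θ : Θ => ∑ i, (θ : Fin d → ℝ) i * u i ^ 2)) :
    IsLUB (thetaNormPairings Θ u) (√(⨆ θ : Θ, ∑ i, (θ : Fin d → ℝ) i * u i ^ 2)) := by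
  refine ⟨?_, fun b hb => ?_⟩
  · rintro _ ⟨w, hw, rfl⟩
    exact sum_mul_le_sqrt_iSup_of_thetaNorm_le_one hpos u hne hbdd hw
  · have hb_sqrt : ∀ θ : Θ, √(∑ i, (θ : Fin d → ℝ) i * u i ^ 2) ≤ b := fun θ =>
      hb (sqrt_sum_mul_sq_mem_thetaNormPairings hpos u θ.2)
    have := hne.to_subtype
    have hb₀ : 0 ≤ b := (Real.sqrt_nonneg _).trans (hb_sqrt (Classical.arbitrary Θ))
    rw [Real.sqrt_le_left hb₀]
    exact ciSup_le fun θ => (Real.sqrt_le_left hb₀).1 (hb_sqrt θ)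

end ThetaNorm

theorem theta_dual_norm_general {d : ℕ} (Θ : Set (Fin d → ℝ)) (hne : Θ.Nonempty)
    (hbdd : Bornology.IsBounded Θ)
    (hpos : ∀ θ ∈ Θ, ∀ i, 0 < θ i) (u : Fin d → ℝ) :
    sSup {x : ℝ | ∃ w : Fin d → ℝ, thetaNorm Θ w ≤ 1 ∧ x = ∑ i, u i * w i} =
      Real.sqrt (⨆ θ : Θ, ∑ i, (θ : Fin d → ℝ) i * u i ^ 2) :=
  (isLUB_thetaNormPairings hpos u hne (hbdd.bddAbove_range_sum_mul _)).csSup_eq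
    ⟨_, sqrt_sum_mul_sq_mem_thetaNormPairings hpos u hne.some_mem⟩

theorem theta_dual_norm {d : ℕ} (Θ : Set (Fin d → ℝ)) (hne : Θ.Nonempty)
    (hconv : Convex ℝ Θ) (hbdd : Bornology.IsBounded Θ)
    (hpos : ∀ θ ∈ Θ, ∀ i, 0 < θ i) (u : Fin d → ℝ) :
    sSup {x : ℝ | ∃ w : Fin d → ℝ, thetaNorm Θ w ≤ 1 ∧ x = ∑ i, u i * w i} =
      Real.sqrt (⨆ θ : Θ, ∑ i, (θ : Fin d → ℝ) i * u i ^ 2) :=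
  theta_dual_norm_general Θ hne hbdd hpos u
end

section
/- If Θ = {θ ∈ R^d : 0 < θ_i, Σ_{i=1}^d θ_i ≤ 1}, then the Θ-norm ‖w‖_Θ = sqrt(inf_{θ∈Θ} Σ_i w_i²/θ_i) equals the ℓ1 norm ‖w‖_1 = Σ_i |w_i|. -/
theorem theta_norm_eq_l1 {d : ℕ} (w : Fin d → ℝ) :
    thetaNorm {θ : Fin d → ℝ | (∀ i, 0 < θ i) ∧ ∑ i, θ i ≤ 1} w = ∑ i, |w i| := by
  set S := ∑ i, |w i| with hSdef
  have hS0 : 0 ≤ S := Finset.sum_nonneg fun i _ => abs_nonneg _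
  set Θ : Set (Fin d → ℝ) := {θ | (∀ i, 0 < θ i) ∧ ∑ i, θ i ≤ 1} with hΘdef
  have hmem : (fun _ : Fin d => (1 : ℝ)/(d+1)) ∈ Θ := by
    constructor
    · intro i; positivity
    · rw [Finset.sum_const, Finset.card_univ, Fintype.card_fin, nsmul_eq_mul, mul_one_div,
        div_le_one (by positivity)]
      linarith
  haveI : Nonempty ↥Θ := ⟨⟨_, hmem⟩⟩
  have lb : ∀ θ : Θ, S ^ 2 ≤ ∑ i, w i ^ 2 / (θ : Fin d → ℝ) i := by
    rintro ⟨θ, hpos, hsum⟩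
    cases isEmpty_or_nonempty (Fin d) with
    | inl h =>
      simp [hSdef]
    | inr h =>
      have hθpos : 0 < ∑ i, θ i := Finset.sum_pos (fun i _ => hpos i) Finset.univ_nonempty
      have key := Finset.sq_sum_div_le_sum_sq_div Finset.univ (fun i => |w i|)
        (g := θ) (fun i _ => hpos i)
      have h1 : S ^ 2 ≤ S ^ 2 / ∑ i, θ i := by
        rw [le_div_iff₀ hθpos]
        nlinarith [sq_nonneg S]
      simpa [sq_abs] using h1.trans key
  have hbdd : BddBelow (Set.range fun θ : Θ => ∑ i, w i ^ 2 / (θ : Fin d → ℝ) i) :=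
    ⟨S ^ 2, Set.forall_mem_range.mpr lb⟩
  have hinf_ge : S ^ 2 ≤ ⨅ θ : Θ, ∑ i, w i ^ 2 / (θ : Fin d → ℝ) i := le_ciInf lb
  have hinf_le : (⨅ θ : Θ, ∑ i, w i ^ 2 / (θ : Fin d → ℝ) i) ≤ S ^ 2 := by
    refine le_of_forall_pos_le_add fun ε hε => ?_
    set δ : ℝ := ε / (d * S + 1) with hδdef
    have hδ : 0 < δ := by positivity
    set θ : Fin d → ℝ := fun i => (|w i| + δ) / (S + d * δ) with hθdef
    have hden : ∀ i : Fin d, 0 < S + (d : ℝ) * δ := by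
      intro i
      have hd1 : (1 : ℝ) ≤ d := by exact_mod_cast Nat.one_le_iff_ne_zero.mpr i.pos.ne'
      nlinarith
    have hsumθ : ∑ i, θ i = (S + d * δ) / (S + d * δ) := by
      rw [← Finset.sum_div, Finset.sum_add_distrib, Finset.sum_const, Finset.card_univ,
        Fintype.card_fin, nsmul_eq_mul, ← hSdef]
    have hθmem : θ ∈ Θ := by
      constructor
      · intro i
        exact div_pos (by positivity) (hden i)
      · rw [hsumθ]
        rcases eq_or_ne (S + d * δ) 0 with h | h
        · simp [h]
        · rw [div_self h]
    have hle : (∑ i, w i ^ 2 / θ i) ≤ S ^ 2 + ε := by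
      have hstep : ∀ i : Fin d, w i ^ 2 / θ i ≤ |w i| * (S + d * δ) := by
        intro i
        have : w i ^ 2 / θ i = w i ^ 2 * (S + d * δ) / (|w i| + δ) := by
          rw [hθdef]; rw [div_div_eq_mul_div]
        rw [this, div_le_iff₀ (by positivity), ← sq_abs (w i)]
        have hd := hden i
        nlinarith [abs_nonneg (w i), mul_nonneg (mul_nonneg (abs_nonneg (w i)) hd.le) hδ.le]
      calc (∑ i, w i ^ 2 / θ i) ≤ ∑ i, |w i| * (S + d * δ) :=
            Finset.sum_le_sum fun i _ => hstep i
        _ = S * (S + d * δ) := by rw [← Finset.sum_mul, ← hSdef]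
        _ ≤ S ^ 2 + ε := by
            have : (d : ℝ) * S * δ ≤ ε := by
              rw [hδdef]
              rw [mul_div_assoc']
              rw [div_le_iff₀ (by positivity)]
              nlinarith
            nlinarith
    exact le_trans (ciInf_le hbdd ⟨θ, hθmem⟩) hle
  have : (⨅ θ : Θ, ∑ i, w i ^ 2 / (θ : Fin d → ℝ) i) = S ^ 2 := le_antisymm hinf_le hinf_ge
  rw [thetaNorm, this, Real.sqrt_sq hS0]
end

section
/- For p ∈ [1,2) and Θ_p = {θ ∈ (0,∞)^d : Σ_i θ_i^{p/(2-p)} ≤ 1}, the Θ_p-norm equals the ℓ_p norm: sqrt(inf_{θ∈Θ_p} Σ_i w_i²/θ_i) = (Σ_i |w_i|^p)^{1/p} for all w ∈ R^d. -/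
open Finset Real Filter Topology

section

variable {ι : Type*} [Fintype ι] {p : ℝ}

theorem rpow_sum_abs_rpow_le_sum_sq_div (hp : 0 < p) (hp2 : p < 2) (w : ι → ℝ)
    {θ : ι → ℝ} (hθ : ∀ i, 0 < θ i) (hθsum : ∑ i, θ i ^ (p / (2 - p)) ≤ 1) :
    (∑ i, |w i| ^ p) ^ (2 / p) ≤ ∑ i, w i ^ 2 / θ i := by
  have hconj : (p / 2)⁻¹.HolderConjugate ((2 - p) / 2)⁻¹ := by
    simpa only [one_div] using
      Real.holderConjugate_one_div (by positivity : 0 < p / 2) (by linarith : 0 < (2 - p) / 2)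
        (by ring)
  have hquot : ∀ i, 0 ≤ w i ^ 2 / θ i := fun i => div_nonneg (sq_nonneg _) (hθ i).le
  have holder := inner_le_Lp_mul_Lq_of_nonneg univ hconj
    (f := fun i => (w i ^ 2 / θ i) ^ (p / 2)) (g := fun i => θ i ^ (p / 2))
    (fun i _ => rpow_nonneg (hquot i) _) (fun i _ => rpow_nonneg (hθ i).le _)
  have hprod : ∀ i, (w i ^ 2 / θ i) ^ (p / 2) * θ i ^ (p / 2) = |w i| ^ p := by
    intro i
    rw [← mul_rpow (hquot i) (hθ i).le, div_mul_cancel₀ _ (hθ i).ne', ← sq_abs,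
      ← rpow_two, ← rpow_mul (abs_nonneg _)]
    ring_nf
  have hpow : ∀ i, (θ i ^ (p / 2)) ^ ((2 - p) / 2)⁻¹ = θ i ^ (p / (2 - p)) := by
    intro i
    rw [← rpow_mul (hθ i).le]
    congr 1
    field_simp
  simp only [hprod, hpow, rpow_rpow_inv (hquot _) (by positivity : p / 2 ≠ 0), one_div,
    inv_inv] at holder
  have hF : 0 ≤ ∑ i, w i ^ 2 / θ i := sum_nonneg fun i _ => hquot i
  have hbound : ∑ i, |w i| ^ p ≤ (∑ i, w i ^ 2 / θ i) ^ (p / 2) :=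
    holder.trans <| mul_le_of_le_one_right (rpow_nonneg hF _) <|
      rpow_le_one (sum_nonneg fun i _ => rpow_nonneg (hθ i).le _) hθsum (by linarith)
  calc (∑ i, |w i| ^ p) ^ (2 / p)
      ≤ ((∑ i, w i ^ 2 / θ i) ^ (p / 2)) ^ (2 / p) :=
        rpow_le_rpow (sum_nonneg fun i _ => rpow_nonneg (abs_nonneg _) _) hbound (by positivity)
    _ = ∑ i, w i ^ 2 / θ i := by
      rw [show 2 / p = (p / 2)⁻¹ by rw [inv_div], rpow_rpow_inv hF (by positivity)]

noncomputable def lpOptimalWeight (p : ℝ) (v : ι → ℝ) (i : ι) : ℝ :=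
  v i ^ (2 - p) / (∑ j, v j ^ p) ^ ((2 - p) / p)

variable {v : ι → ℝ}

theorem lpOptimalWeight_pos (hv : ∀ i, 0 < v i) (i : ι) : 0 < lpOptimalWeight p v i := by
  have hS : 0 < ∑ j, v j ^ p :=
    (rpow_pos_of_pos (hv i) p).trans_le
      (single_le_sum (fun j _ => rpow_nonneg (hv j).le p) (mem_univ i))
  exact div_pos (rpow_pos_of_pos (hv i) _) (rpow_pos_of_pos hS _)

theorem sum_lpOptimalWeight_rpow_le_one (hp : p ≠ 0) (hp2 : p ≠ 2) (hv : ∀ i, 0 < v i) :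
    ∑ i, lpOptimalWeight p v i ^ (p / (2 - p)) ≤ 1 := by
  have h2p : 2 - p ≠ 0 := sub_ne_zero.mpr (Ne.symm hp2)
  have hS : 0 ≤ ∑ j, v j ^ p := sum_nonneg fun j _ => rpow_nonneg (hv j).le p
  have hterm : ∀ i, lpOptimalWeight p v i ^ (p / (2 - p)) = v i ^ p / ∑ j, v j ^ p := by
    intro i
    rw [lpOptimalWeight, div_rpow (rpow_nonneg (hv i).le _) (rpow_nonneg hS _),
      ← rpow_mul (hv i).le, ← rpow_mul hS, mul_div_cancel₀ p h2p,
      show (2 - p) / p * (p / (2 - p)) = 1 by field_simp, rpow_one]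
  simp only [hterm, ← sum_div]
  exact div_self_le_one _

theorem sum_sq_div_lpOptimalWeight (hp : p ≠ 0) (hv : ∀ i, 0 < v i) :
    ∑ i, v i ^ 2 / lpOptimalWeight p v i = (∑ i, v i ^ p) ^ (2 / p) := by
  have hS : 0 ≤ ∑ j, v j ^ p := sum_nonneg fun j _ => rpow_nonneg (hv j).le p
  have hterm : ∀ i,
      v i ^ 2 / lpOptimalWeight p v i = v i ^ p * (∑ j, v j ^ p) ^ ((2 - p) / p) := by
    intro i
    rw [lpOptimalWeight, div_div_eq_mul_div, mul_div_right_comm, ← rpow_two,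
      ← rpow_sub (hv i), sub_sub_cancel]
  have hexp : 2 / p = 1 + (2 - p) / p := by field_simp; ring
  rw [sum_congr rfl fun i _ => hterm i, ← sum_mul, hexp,
    rpow_add' hS (hexp ▸ div_ne_zero two_ne_zero hp), rpow_one]

theorem iInf_sum_sq_div_eq (hp : 0 < p) (hp2 : p < 2) (w : ι → ℝ) :
    ⨅ θ : {θ : ι → ℝ | (∀ i, 0 < θ i) ∧ ∑ i, θ i ^ (p / (2 - p)) ≤ 1},
      ∑ i, w i ^ 2 / (θ : ι → ℝ) i = (∑ i, |w i| ^ p) ^ (2 / p) := by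
  set Θ := {θ : ι → ℝ | (∀ i, 0 < θ i) ∧ ∑ i, θ i ^ (p / (2 - p)) ≤ 1}
  have lower (θ : Θ) : (∑ i, |w i| ^ p) ^ (2 / p) ≤ ∑ i, w i ^ 2 / (θ : ι → ℝ) i :=
    rpow_sum_abs_rpow_le_sum_sq_div hp hp2 w θ.2.1 θ.2.2
  have upper (ε : ℝ) (hε : 0 < ε) :
      ∃ θ : Θ, ∑ i, w i ^ 2 / (θ : ι → ℝ) i ≤ (∑ i, max |w i| ε ^ p) ^ (2 / p) := by
    have hv : ∀ i, 0 < max |w i| ε := fun i => hε.trans_le (le_max_right _ _)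
    refine ⟨⟨lpOptimalWeight p _, lpOptimalWeight_pos hv,
      sum_lpOptimalWeight_rpow_le_one hp.ne' hp2.ne hv⟩, ?_⟩
    rw [← sum_sq_div_lpOptimalWeight hp.ne' hv]
    exact sum_le_sum fun i _ => div_le_div_of_nonneg_right
      (sq_le_sq.mpr ((le_max_left _ _).trans (le_abs_self _))) (lpOptimalWeight_pos hv i).le
  have hlim : Tendsto (fun ε => (∑ i, max |w i| ε ^ p) ^ (2 / p)) (𝓝[>] 0)
      (𝓝 ((∑ i, |w i| ^ p) ^ (2 / p))) := by
    have hcont : Continuous fun ε => (∑ i, max |w i| ε ^ p) ^ (2 / p) :=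
      (continuous_finsetSum _ fun i _ =>
        (continuous_const.max continuous_id).rpow_const fun _ => Or.inr hp.le).rpow_const
          fun _ => Or.inr (by positivity)
    simpa only [max_eq_left, abs_nonneg] using
      hcont.continuousWithinAt.tendsto (s := Set.Ioi 0) (x := 0)
  have : Nonempty Θ := (upper 1 one_pos).nonempty
  refine le_antisymm (ge_of_tendsto hlim ?_) (le_ciInf lower)
  filter_upwards [self_mem_nhdsWithin] with ε hε
  obtain ⟨θ, hθ⟩ := upper ε hε
  exact ciInf_le_of_le ⟨_, Set.forall_mem_range.mpr lower⟩ θ hθ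

end

theorem theta_norm_eq_lp {d : ℕ} (p : ℝ) (hp1 : 1 ≤ p) (hp2 : p < 2) (w : Fin d → ℝ) :
    thetaNorm {θ : Fin d → ℝ | (∀ i, 0 < θ i) ∧ ∑ i, θ i ^ (p / (2 - p)) ≤ 1} w =
      (∑ i, |w i| ^ p) ^ (1 / p) := by
  have hp : 0 < p := one_pos.trans_le hp1
  rw [thetaNorm, iInf_sum_sq_div_eq hp hp2, sqrt_eq_rpow,
    ← rpow_mul (sum_nonneg fun i _ => rpow_nonneg (abs_nonneg _) _)]
  congr 1
  ring
end

section
/- Let 0 < a ≤ b, c ∈ [da, bd], and Θ = {θ ∈ R^d : a ≤ θ_i ≤ b, Σ_i θ_i ≤ c}. With ρ = (c - da)/(b - a) and k = ⌊ρ⌋, the dual box-norm satisfies ‖u‖²_{*,box} = a‖u‖₂² + (b-a)(Σ_{i=1}^k (|u|↓_i)² + (ρ-k)(|u|↓_{k+1})²) for all u ∈ R^d, where |u|↓ denotes the components of u reordered so that they are nonincreasing in absolute value. -/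
/-!
Writing `θ = a + (b - a) t` turns `Θ` into the capped simplex `{t ∈ [0,1]^d : ∑ t ≤ ρ}`, so the
dual norm is `a ‖u‖₂²` plus `b - a` times the maximum of `∑ tᵢ uᵢ²` over that set. A linear
functional with nonnegative weights is maximised there greedily: mass one on the `⌊ρ⌋` largest
weights and the remainder `ρ - ⌊ρ⌋` on the next one.
-/

open Finset

def padZero {M : Type*} [Zero M] {n : ℕ} (f : Fin n → M) (j : ℕ) : M :=
  if h : j < n then f ⟨j, h⟩ else 0

section padZero

variable {M : Type*} {n : ℕ}

@[simp]
theorem padZero_fin [Zero M] (f : Fin n → M) (i : Fin n) : padZero f i = f i :=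
  dif_pos i.isLt

theorem padZero_of_le [Zero M] (f : Fin n → M) {j : ℕ} (h : n ≤ j) : padZero f j = 0 :=
  dif_neg (Nat.not_lt.2 h)

theorem padZero_nonneg [Zero M] [Preorder M] {f : Fin n → M} (hf : ∀ i, 0 ≤ f i) (j : ℕ) :
    0 ≤ padZero f j := by
  unfold padZero
  split_ifs
  exacts [hf _, le_rfl]

theorem antitone_padZero [Zero M] [Preorder M] {f : Fin n → M} (hf : Antitone f)
    (hf0 : ∀ i, 0 ≤ f i) : Antitone (padZero f) := by
  intro i j hij
  by_cases hj : j < n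
  · rw [padZero, dif_pos hj, padZero, dif_pos (hij.trans_lt hj)]
    exact hf (Fin.mk_le_mk.2 hij)
  · rw [padZero_of_le f (Nat.not_lt.1 hj)]
    exact padZero_nonneg hf0 i

end padZero

/-- The greedy weights: one below `⌊ρ⌋₊`, the fractional part of `ρ` at `⌊ρ⌋₊`, zero above. -/
noncomputable def capWeight (ρ : ℝ) (j : ℕ) : ℝ := max 0 (min 1 (ρ - j))

section capWeight

variable {ρ : ℝ} {j n : ℕ}

theorem capWeight_nonneg (ρ : ℝ) (j : ℕ) : 0 ≤ capWeight ρ j := le_max_left _ _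

theorem capWeight_le_one (ρ : ℝ) (j : ℕ) : capWeight ρ j ≤ 1 :=
  max_le zero_le_one (min_le_left _ _)

theorem capWeight_of_lt_floor (h : j < ⌊ρ⌋₊) : capWeight ρ j = 1 := by
  have : ((j + 1 : ℕ) : ℝ) ≤ ρ := (Nat.le_floor_iff' j.succ_ne_zero).1 h
  push_cast at this
  rw [capWeight, min_eq_left (by linarith), max_eq_right zero_le_one]

theorem capWeight_floor (hρ : 0 ≤ ρ) : capWeight ρ ⌊ρ⌋₊ = ρ - ⌊ρ⌋₊ := by
  have h1 := Nat.floor_le hρ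
  have h2 := Nat.lt_floor_add_one ρ
  rw [capWeight, min_eq_right (by linarith), max_eq_right (by linarith)]

theorem capWeight_of_floor_lt (h : ⌊ρ⌋₊ < j) : capWeight ρ j = 0 := by
  have h1 := Nat.lt_floor_add_one ρ
  have h2 : ((⌊ρ⌋₊ + 1 : ℕ) : ℝ) ≤ j := by exact_mod_cast h
  push_cast at h2
  rw [capWeight, min_eq_right (by linarith), max_eq_left (by linarith)]

theorem sum_range_capWeight (hρ : 0 ≤ ρ) (n : ℕ) : ∑ j ∈ range n, capWeight ρ j = min ρ n := by
  induction n with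
  | zero => simp [hρ]
  | succ n ih =>
    rw [sum_range_succ, ih, capWeight]
    push_cast
    simp only [min_def, max_def]
    split_ifs <;> linarith

theorem sum_capWeight_mul_eq (hρ : 0 ≤ ρ) {v : ℕ → ℝ} (hv : ∀ j, n ≤ j → v j = 0) :
    ∑ j ∈ range n, capWeight ρ j * v j =
      ∑ j ∈ range ⌊ρ⌋₊, v j + (ρ - ⌊ρ⌋₊) * v ⌊ρ⌋₊ := by
  set k := ⌊ρ⌋₊
  have hn : ∑ j ∈ range n, capWeight ρ j * v j =
      ∑ j ∈ range (n + (k + 1)), capWeight ρ j * v j :=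
    sum_subset (range_subset_range.2 (by omega)) fun j _ hj => by
      rw [hv j (by simpa using hj), mul_zero]
  have hk : ∑ j ∈ range (k + 1), capWeight ρ j * v j =
      ∑ j ∈ range (n + (k + 1)), capWeight ρ j * v j :=
    sum_subset (range_subset_range.2 (by omega)) fun j _ hj => by
      rw [capWeight_of_floor_lt (by simpa [Nat.lt_succ_iff] using hj), zero_mul]
  rw [hn, ← hk, sum_range_succ, capWeight_floor hρ]
  congr 1
  exact sum_congr rfl fun j hj => by rw [capWeight_of_lt_floor (mem_range.1 hj), one_mul]

/-- Comparing each weight `v j` with the pivot `v ⌊ρ⌋₊` reduces the claim to the mass bound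
`∑ t ≤ ∑ capWeight ρ = min ρ n`. -/
theorem sum_mul_le_sum_capWeight_mul {t v : ℕ → ℝ} (hv : Antitone v) (hv0 : ∀ j, 0 ≤ v j)
    (ht0 : ∀ j, 0 ≤ t j) (ht1 : ∀ j, t j ≤ 1) (hts : ∑ j ∈ range n, t j ≤ ρ) :
    ∑ j ∈ range n, t j * v j ≤ ∑ j ∈ range n, capWeight ρ j * v j := by
  set k := ⌊ρ⌋₊
  have hρ : 0 ≤ ρ := (sum_nonneg fun j _ => ht0 j).trans hts
  have hmass : ∑ j ∈ range n, t j ≤ ∑ j ∈ range n, capWeight ρ j := by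
    rw [sum_range_capWeight hρ]
    refine le_min hts ?_
    simpa using sum_le_sum fun j (_ : j ∈ range n) => ht1 j
  have hexch : ∀ j, (t j - capWeight ρ j) * v j ≤ (t j - capWeight ρ j) * v k := by
    intro j
    rcases lt_trichotomy j k with hj | rfl | hj
    · rw [capWeight_of_lt_floor hj]
      exact mul_le_mul_of_nonpos_left (hv hj.le) (by linarith [ht1 j])
    · exact le_rfl
    · rw [capWeight_of_floor_lt hj, sub_zero]
      exact mul_le_mul_of_nonneg_left (hv hj.le) (ht0 j)
  have hgap := calc
    ∑ j ∈ range n, t j * v j - ∑ j ∈ range n, capWeight ρ j * v j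
        = ∑ j ∈ range n, (t j - capWeight ρ j) * v j := by
          rw [← sum_sub_distrib]; simp only [sub_mul]
    _ ≤ ∑ j ∈ range n, (t j - capWeight ρ j) * v k := sum_le_sum fun j _ => hexch j
    _ = (∑ j ∈ range n, t j - ∑ j ∈ range n, capWeight ρ j) * v k := by
          rw [← sum_mul, sum_sub_distrib]
    _ ≤ 0 := mul_nonpos_of_nonpos_of_nonneg (by linarith) (hv0 k)
  linarith

end capWeight

section sorted

variable {d : ℕ} {ρ : ℝ} {x : Fin d → ℝ} {σ : Equiv.Perm (Fin d)}

theorem sum_range_padZero_comp (f : Fin d → ℝ) :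
    ∑ j ∈ range d, padZero (f ∘ σ) j = ∑ i, f i := by
  rw [← Fin.sum_univ_eq_sum_range]
  simpa using Equiv.sum_comp σ f

theorem sum_mul_le_sum_capWeight_mul_padZero (hx0 : ∀ i, 0 ≤ x i) (hσ : Antitone (x ∘ σ))
    {t : Fin d → ℝ} (ht0 : ∀ i, 0 ≤ t i) (ht1 : ∀ i, t i ≤ 1) (hts : ∑ i, t i ≤ ρ) :
    ∑ i, t i * x i ≤ ∑ j ∈ range d, capWeight ρ j * padZero (x ∘ σ) j := by
  have ht1' : ∀ j, padZero (t ∘ σ) j ≤ 1 := fun j => by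
    unfold padZero
    split_ifs
    exacts [ht1 _, zero_le_one]
  calc ∑ i, t i * x i = ∑ j ∈ range d, padZero (t ∘ σ) j * padZero (x ∘ σ) j := by
        rw [← Fin.sum_univ_eq_sum_range]
        simpa using (Equiv.sum_comp σ fun i => t i * x i).symm
    _ ≤ _ := sum_mul_le_sum_capWeight_mul (antitone_padZero hσ fun i => hx0 _)
        (padZero_nonneg fun i => hx0 _) (padZero_nonneg fun i => ht0 _) ht1'
        (by rwa [sum_range_padZero_comp])

theorem sum_capWeight_symm_mul (ρ : ℝ) (x : Fin d → ℝ) (σ : Equiv.Perm (Fin d)) :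
    ∑ i, capWeight ρ (σ.symm i) * x i = ∑ j ∈ range d, capWeight ρ j * padZero (x ∘ σ) j := by
  rw [← Fin.sum_univ_eq_sum_range, ← Equiv.sum_comp σ]
  simp

theorem sum_capWeight_symm_le (hρ : 0 ≤ ρ) (σ : Equiv.Perm (Fin d)) :
    ∑ i, capWeight ρ (σ.symm i) ≤ ρ := by
  rw [Equiv.sum_comp σ.symm fun i : Fin d => capWeight ρ i, Fin.sum_univ_eq_sum_range,
    sum_range_capWeight hρ]
  exact min_le_left _ _

end sorted

section box

variable {d : ℕ} {a b c : ℝ} {x : Fin d → ℝ} {σ : Equiv.Perm (Fin d)}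

theorem sum_mul_le_of_mem_box (hab : a ≤ b) (hx0 : ∀ i, 0 ≤ x i) (hσ : Antitone (x ∘ σ))
    {θ : Fin d → ℝ} (hθ : ∀ i, a ≤ θ i ∧ θ i ≤ b) (hθc : ∑ i, θ i ≤ c) :
    ∑ i, θ i * x i ≤ a * ∑ i, x i +
      (b - a) * ∑ j ∈ range d, capWeight ((c - d * a) / (b - a)) j * padZero (x ∘ σ) j := by
  set t : Fin d → ℝ := fun i => (θ i - a) / (b - a)
  have hθt : ∀ i, θ i = a + (b - a) * t i := fun i => by
    rcases hab.eq_or_lt with rfl | hlt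
    -- `t i = 0` by division by zero, but `θ i = a` anyway
    · simp [le_antisymm (hθ i).2 (hθ i).1]
    · simp only [t]; field_simp; ring
  have hts : ∑ i, t i ≤ (c - d * a) / (b - a) := by
    simp only [t, ← sum_div, sum_sub_distrib, sum_const, card_univ, Fintype.card_fin,
      nsmul_eq_mul]
    exact div_le_div_of_nonneg_right (by linarith) (sub_nonneg.2 hab)
  have hbound := sum_mul_le_sum_capWeight_mul_padZero hx0 hσ
    (fun i => div_nonneg (sub_nonneg.2 (hθ i).1) (sub_nonneg.2 hab))
    (fun i => div_le_one_of_le₀ (by linarith [hθ i]) (sub_nonneg.2 hab)) hts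
  calc ∑ i, θ i * x i = a * ∑ i, x i + (b - a) * ∑ i, t i * x i := by
        simp only [hθt, add_mul, sum_add_distrib, mul_sum, mul_assoc]
    _ ≤ _ := by gcongr

theorem exists_mem_box_sum_mul_eq (hab : a ≤ b) (hc : a * d ≤ c) (x : Fin d → ℝ)
    (σ : Equiv.Perm (Fin d)) :
    ∃ θ : Fin d → ℝ, ((∀ i, a ≤ θ i ∧ θ i ≤ b) ∧ ∑ i, θ i ≤ c) ∧ ∑ i, θ i * x i =
      a * ∑ i, x i +
        (b - a) * ∑ j ∈ range d, capWeight ((c - d * a) / (b - a)) j * padZero (x ∘ σ) j := by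
  set ρ := (c - d * a) / (b - a)
  have hρ : 0 ≤ ρ := div_nonneg (by linarith) (sub_nonneg.2 hab)
  have hmass : (b - a) * ρ ≤ c - d * a := by
    rcases hab.eq_or_lt with rfl | hlt
    · simp [mul_comm (d : ℝ), hc]
    · rw [mul_div_cancel₀ _ (sub_ne_zero.2 hlt.ne')]
  refine ⟨fun i => a + (b - a) * capWeight ρ (σ.symm i), ⟨fun i => ⟨?_, ?_⟩, ?_⟩, ?_⟩
  · nlinarith [capWeight_nonneg ρ (σ.symm i)]
  · nlinarith [capWeight_le_one ρ (σ.symm i)]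
  · simp only [sum_add_distrib, ← mul_sum, sum_const, card_univ, Fintype.card_fin, nsmul_eq_mul]
    nlinarith [sum_capWeight_symm_le hρ σ]
  · simp only [add_mul, sum_add_distrib, ← mul_sum, mul_assoc, sum_capWeight_symm_mul]

theorem ciSup_box_sum_mul (hab : a ≤ b) (hc : a * d ≤ c) (hx0 : ∀ i, 0 ≤ x i)
    (hσ : Antitone (x ∘ σ)) :
    ⨆ θ : {θ : Fin d → ℝ | (∀ i, a ≤ θ i ∧ θ i ≤ b) ∧ ∑ i, θ i ≤ c}, ∑ i, (θ : Fin d → ℝ) i * x i =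
      a * ∑ i, x i +
        (b - a) * ∑ j ∈ range d, capWeight ((c - d * a) / (b - a)) j * padZero (x ∘ σ) j := by
  obtain ⟨θ, hθ, hval⟩ := exists_mem_box_sum_mul_eq hab hc x σ
  refine IsGreatest.csSup_eq ⟨⟨⟨θ, hθ⟩, hval⟩, ?_⟩
  rintro _ ⟨⟨θ', hθ', hθ'c⟩, rfl⟩
  exact sum_mul_le_of_mem_box hab hx0 hσ hθ' hθ'c

end box

theorem dual_box_norm_sq_general {d : ℕ} (a b c : ℝ) (hab : a ≤ b)
    (hc1 : a * d ≤ c) (u : Fin d → ℝ) (σ : Equiv.Perm (Fin d))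
    (hσ : Antitone fun i => |u (σ i)|) :
    (⨆ θ : {θ : Fin d → ℝ | (∀ i, a ≤ θ i ∧ θ i ≤ b) ∧ ∑ i, θ i ≤ c},
        ∑ i, (θ : Fin d → ℝ) i * u i ^ 2) =
      a * ∑ i, u i ^ 2 +
        (b - a) * ((∑ i ∈ Finset.range ⌊(c - d * a) / (b - a)⌋₊,
            (if h : i < d then |u (σ ⟨i, h⟩)| else 0) ^ 2) +
          ((c - d * a) / (b - a) - (⌊(c - d * a) / (b - a)⌋₊ : ℝ)) *
            (if h : ⌊(c - d * a) / (b - a)⌋₊ < d then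
              |u (σ ⟨⌊(c - d * a) / (b - a)⌋₊, h⟩)| else 0) ^ 2) := by
  have hρ : 0 ≤ (c - d * a) / (b - a) := div_nonneg (by linarith) (sub_nonneg.2 hab)
  have hsorted : Antitone ((fun i => u i ^ 2) ∘ σ) := fun i j hij => by
    simpa only [Function.comp, sq_abs] using pow_le_pow_left₀ (abs_nonneg _) (hσ hij) 2
  have hpad : ∀ j, padZero ((fun i => u i ^ 2) ∘ σ) j =
      (if h : j < d then |u (σ ⟨j, h⟩)| else 0) ^ 2 := fun j => by
    unfold padZero
    split_ifs <;> simp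
  rw [ciSup_box_sum_mul hab hc1 (fun i => sq_nonneg (u i)) hsorted,
    sum_capWeight_mul_eq hρ fun j => padZero_of_le _]
  simp only [hpad]

theorem dual_box_norm_sq {d : ℕ} (a b c : ℝ) (ha : 0 < a) (hab : a ≤ b)
    (hc1 : a * d ≤ c) (hc2 : c ≤ b * d) (u : Fin d → ℝ) (σ : Equiv.Perm (Fin d))
    (hσ : Antitone fun i => |u (σ i)|) :
    (⨆ θ : {θ : Fin d → ℝ | (∀ i, a ≤ θ i ∧ θ i ≤ b) ∧ ∑ i, θ i ≤ c},
        ∑ i, (θ : Fin d → ℝ) i * u i ^ 2) =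
      a * ∑ i, u i ^ 2 +
        (b - a) * ((∑ i ∈ Finset.range ⌊(c - d * a) / (b - a)⌋₊,
            (if h : i < d then |u (σ ⟨i, h⟩)| else 0) ^ 2) +
          ((c - d * a) / (b - a) - (⌊(c - d * a) / (b - a)⌋₊ : ℝ)) *
            (if h : ⌊(c - d * a) / (b - a)⌋₊ < d then
              |u (σ ⟨⌊(c - d * a) / (b - a)⌋₊, h⟩)| else 0) ^ 2) :=
  dual_box_norm_sq_general a b c hab hc1 u σ hσ
end

section
/- For each k ∈ {1,…,d}, the dual of the k-support norm is the ℓ2-norm of the k largest components in absolute value: ‖u‖_{*,(k)} = sqrt(Σ_{i=1}^k (|u|↓_i)²), where |u|↓ is u reordered nonincreasingly in absolute value. -/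
/-!
The unit ball of the k-support norm is the convex hull `C` of the k-sparse Euclidean unit
vectors. Since `C` is a convex neighbourhood of `0`, the sublevel set `{gauge C ≤ 1}` is the
closure of `C`, so a linear functional has the same supremum there as on the k-sparse unit
vectors. For such a vector `v` with support `t`, Cauchy–Schwarz gives
`⟪u, v⟫ ≤ ‖u|_t‖₂`, and `‖u|_t‖₂` is largest when `t` carries the `k` largest `|u i|`;
the normalised restriction of `u` to those coordinates attains the bound.
-/

noncomputable def ksupNorm (d k : ℕ) (w : Fin d → ℝ) : ℝ :=
  gauge (convexHull ℝ
    {v : Fin d → ℝ | {i | v i ≠ 0}.ncard ≤ k ∧ Real.sqrt (∑ i, v i ^ 2) ≤ 1}) w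

open Finset Topology

theorem Finset.sum_le_sum_range_card_of_antitone {M : Type*} [AddCommMonoid M] [PartialOrder M]
    [IsOrderedAddMonoid M] {f : ℕ → M} (hf : Antitone f) (s : Finset ℕ) :
    ∑ n ∈ s, f n ≤ ∑ n ∈ range #s, f n := by
  induction s using Finset.induction_on_max with
  | empty => simp
  | insert a s has ih =>
    have ha : a ∉ s := fun h => lt_irrefl a (has a h)
    have hcard : #s ≤ a := by simpa using card_le_card fun x hx => mem_range.2 (has x hx)
    rw [sum_insert ha, card_insert_of_notMem ha, sum_range_succ, add_comm]
    exact add_le_add ih (hf hcard)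

theorem Finset.sum_le_sum_range_of_antitone {M : Type*} [AddCommMonoid M] [PartialOrder M]
    [IsOrderedAddMonoid M] {f : ℕ → M} (hf : Antitone f) (hf₀ : 0 ≤ f) {s : Finset ℕ} {k : ℕ}
    (hs : #s ≤ k) : ∑ n ∈ s, f n ≤ ∑ n ∈ range k, f n :=
  (sum_le_sum_range_card_of_antitone hf s).trans <|
    sum_le_sum_of_subset_of_nonneg (range_subset_range.2 hs) fun n _ _ => hf₀ n

theorem le_of_gauge_convexHull_le_one {E : Type*} [AddCommGroup E] [Module ℝ E]
    [TopologicalSpace E] [IsTopologicalAddGroup E] [ContinuousSMul ℝ E] {s : Set E}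
    (hs : convexHull ℝ s ∈ 𝓝 0) (f : E →L[ℝ] ℝ) {M : ℝ} (hM : ∀ x ∈ s, f x ≤ M) {x : E}
    (hx : gauge (convexHull ℝ s) x ≤ 1) : f x ≤ M :=
  closure_minimal (convexHull_min hM (convex_halfSpace_le f.toLinearMap.isLinear M))
    (isClosed_le f.continuous continuous_const)
    ((gauge_le_one_iff_mem_closure (convex_convexHull ℝ s) hs).1 hx)

def kSparseBall (ι : Type*) [Fintype ι] (k : ℕ) : Set (ι → ℝ) :=
  {v | {i | v i ≠ 0}.ncard ≤ k ∧ √(∑ i, v i ^ 2) ≤ 1}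

theorem ksupNorm_eq_gauge (d k : ℕ) (w : Fin d → ℝ) :
    ksupNorm d k w = gauge (convexHull ℝ (kSparseBall (Fin d) k)) w := rfl

section kSparseBall

variable {ι : Type*} [Fintype ι] {k : ℕ}

theorem Pi.single_mem_kSparseBall [DecidableEq ι] (hk : 1 ≤ k) (i : ι) {c : ℝ} (hc : |c| ≤ 1) :
    Pi.single i c ∈ kSparseBall ι k := by
  refine ⟨(Set.ncard_le_ncard (t := {i}) fun j hj => ?_).trans (by simpa using hk), ?_⟩
  · by_contra hji
    exact hj (Pi.single_eq_of_ne (Set.mem_singleton_iff.not.1 hji) _)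
  · simpa [Pi.single_apply, apply_ite (· ^ 2)] using hc

theorem convexHull_kSparseBall_mem_nhds [Nonempty ι] (hk : 1 ≤ k) :
    convexHull ℝ (kSparseBall ι k) ∈ 𝓝 0 := by
  classical
  have hn : (0 : ℝ) < Fintype.card ι := by exact_mod_cast Fintype.card_pos
  refine Filter.mem_of_superset (Metric.ball_mem_nhds 0 (one_div_pos.2 hn)) fun v hv => ?_
  have hv_eq : ∑ i, (1 / Fintype.card ι : ℝ) • Pi.single i (Fintype.card ι * v i) = v := by
    ext j
    simp [Finset.sum_apply, Pi.single_apply]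
  rw [← hv_eq]
  refine (convex_convexHull ℝ _).sum_mem (fun _ _ => by positivity) (by simp [hn.ne'])
    fun i _ => subset_convexHull ℝ _ (Pi.single_mem_kSparseBall hk i ?_)
  have hvi : |v i| < 1 / Fintype.card ι := by
    simpa using (norm_le_pi_norm v i).trans_lt (mem_ball_zero_iff.1 hv)
  rw [abs_mul, abs_of_pos hn]
  calc (Fintype.card ι : ℝ) * |v i| ≤ Fintype.card ι * (1 / Fintype.card ι) := by gcongr
    _ = 1 := by field_simp

theorem exists_card_le_sum_mul_le_of_mem_kSparseBall (u : ι → ℝ) {v : ι → ℝ}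
    (hv : v ∈ kSparseBall ι k) :
    ∃ t : Finset ι, #t ≤ k ∧ ∑ i, u i * v i ≤ √(∑ i ∈ t, u i ^ 2) := by
  classical
  obtain ⟨hcard, hnorm⟩ := hv
  refine ⟨univ.filter (v · ≠ 0), by simpa [Set.ncard_eq_toFinset_card'] using hcard, ?_⟩
  have hv₁ : √(∑ i ∈ univ.filter (v · ≠ 0), v i ^ 2) ≤ 1 :=
    (Real.sqrt_le_sqrt (sum_le_sum_of_subset_of_nonneg (subset_univ _)
      fun i _ _ => sq_nonneg (v i))).trans hnorm
  calc ∑ i, u i * v i = ∑ i ∈ univ.filter (v · ≠ 0), u i * v i :=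
        (sum_filter_of_ne fun i _ h => by contrapose! h; simp [h]).symm
    _ ≤ √(∑ i ∈ univ.filter (v · ≠ 0), u i ^ 2) * √(∑ i ∈ univ.filter (v · ≠ 0), v i ^ 2) :=
        Real.sum_mul_le_sqrt_mul_sqrt _ u v
    _ ≤ √(∑ i ∈ univ.filter (v · ≠ 0), u i ^ 2) :=
        mul_le_of_le_one_right (Real.sqrt_nonneg _) hv₁

theorem exists_mem_kSparseBall_sum_mul_eq (u : ι → ℝ) {t : Finset ι} (ht : #t ≤ k) :
    ∃ v ∈ kSparseBall ι k, ∑ i, u i * v i = √(∑ i ∈ t, u i ^ 2) := by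
  classical
  set M := √(∑ i ∈ t, u i ^ 2)
  have hM : M ^ 2 = ∑ i ∈ t, u i ^ 2 := Real.sq_sqrt (sum_nonneg fun i _ => sq_nonneg (u i))
  -- when `M = 0` this is the zero vector, since `u i / 0 = 0`
  refine ⟨fun i => if i ∈ t then u i / M else 0, ⟨?_, ?_⟩, ?_⟩
  · refine (Set.ncard_le_ncard (t := t) fun i hi => ?_).trans (by simpa using ht)
    by_contra h
    exact hi (if_neg h)
  · simp only [apply_ite (· ^ 2), div_pow, ne_eq, OfNat.ofNat_ne_zero, not_false_eq_true,
      zero_pow, sum_ite_mem, univ_inter, ← sum_div, ← hM]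
    exact Real.sqrt_le_one.2 (div_self_le_one _)
  · simp only [mul_ite, mul_zero, sum_ite_mem, univ_inter, ← mul_div_assoc, ← sq, ← sum_div, ← hM]
    rw [sq, mul_self_div_self]

end kSparseBall

section sortedAbs

variable {d : ℕ} (u : Fin d → ℝ) (σ : Equiv.Perm (Fin d))

-- `n` is `0`-based and the sequence is padded by zeros past `d`; when `σ` sorts `|u|`
-- decreasingly, `sortedAbs u σ` lists the entries of `|u|↓`.
def sortedAbs (n : ℕ) : ℝ :=
  if h : n < d then |u (σ ⟨n, h⟩)| else 0

theorem sortedAbs_nonneg (n : ℕ) : 0 ≤ sortedAbs u σ n := by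
  unfold sortedAbs
  split_ifs <;> simp

theorem sortedAbs_symm_apply (j : Fin d) : sortedAbs u σ (σ.symm j) = |u j| := by
  simp [sortedAbs]

variable {u σ}

theorem antitone_sortedAbs (hσ : Antitone fun i => |u (σ i)|) : Antitone (sortedAbs u σ) := by
  intro m n hmn
  unfold sortedAbs
  split_ifs with hn hm
  · exact hσ (Fin.mk_le_mk.2 hmn)
  · omega
  · exact abs_nonneg _
  · exact le_rfl

theorem sum_sq_eq_sum_image_sortedAbs (t : Finset (Fin d)) :
    ∑ j ∈ t, u j ^ 2 = ∑ n ∈ t.image (fun j => (σ.symm j : ℕ)), sortedAbs u σ n ^ 2 := by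
  rw [sum_image fun i _ j _ h => σ.symm.injective (Fin.val_injective h)]
  simp [sortedAbs_symm_apply]

theorem sum_sq_le_sum_range_sortedAbs (hσ : Antitone fun i => |u (σ i)|) {k : ℕ}
    {t : Finset (Fin d)} (ht : #t ≤ k) :
    ∑ j ∈ t, u j ^ 2 ≤ ∑ n ∈ range k, sortedAbs u σ n ^ 2 := by
  rw [sum_sq_eq_sum_image_sortedAbs]
  refine sum_le_sum_range_of_antitone (fun m n hmn => ?_) (fun n => sq_nonneg _)
    (card_image_le.trans ht)
  exact pow_le_pow_left₀ (sortedAbs_nonneg u σ n) (antitone_sortedAbs hσ hmn) 2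

theorem exists_card_le_sum_sq_eq_sum_range_sortedAbs {k : ℕ} (hkd : k ≤ d) :
    ∃ t : Finset (Fin d), #t ≤ k ∧ ∑ j ∈ t, u j ^ 2 = ∑ n ∈ range k, sortedAbs u σ n ^ 2 := by
  set t := univ.filter fun j => (σ.symm j : ℕ) < k
  have ht : t.image (fun j => (σ.symm j : ℕ)) = range k := by
    ext n
    simp only [t, mem_image, mem_filter, mem_univ, true_and, mem_range]
    refine ⟨fun ⟨j, hj, hjn⟩ => hjn ▸ hj, fun hn => ⟨σ ⟨n, by omega⟩, by simpa using hn, by simp⟩⟩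
  refine ⟨t, ?_, by rw [sum_sq_eq_sum_image_sortedAbs, ht]⟩
  rw [← card_range k, ← ht]
  exact (card_image_of_injective _ fun i j h => σ.symm.injective (Fin.val_injective h)).ge

end sortedAbs

theorem ksup_dual_norm {d k : ℕ} (hk1 : 1 ≤ k) (hkd : k ≤ d) (u : Fin d → ℝ)
    (σ : Equiv.Perm (Fin d)) (hσ : Antitone fun i => |u (σ i)|) :
    sSup {x : ℝ | ∃ w : Fin d → ℝ, ksupNorm d k w ≤ 1 ∧ x = ∑ i, u i * w i} =
      Real.sqrt (∑ i ∈ Finset.range k, (if h : i < d then |u (σ ⟨i, h⟩)| else 0) ^ 2) := by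
  change _ = √(∑ n ∈ range k, sortedAbs u σ n ^ 2)
  have : Nonempty (Fin d) := ⟨⟨0, by omega⟩⟩
  let f : (Fin d → ℝ) →L[ℝ] ℝ := ∑ i, u i • ContinuousLinearMap.proj i
  have hf (w : Fin d → ℝ) : f w = ∑ i, u i * w i := by simp [f]
  have hbound : ∀ v ∈ kSparseBall (Fin d) k, f v ≤ √(∑ n ∈ range k, sortedAbs u σ n ^ 2) := by
    intro v hv
    obtain ⟨t, ht, htv⟩ := exists_card_le_sum_mul_le_of_mem_kSparseBall u hv
    exact (hf v).trans_le (htv.trans (Real.sqrt_le_sqrt (sum_sq_le_sum_range_sortedAbs hσ ht)))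
  obtain ⟨t, ht, hts⟩ := exists_card_le_sum_sq_eq_sum_range_sortedAbs (u := u) (σ := σ) hkd
  obtain ⟨v, hv, hvt⟩ := exists_mem_kSparseBall_sum_mul_eq u ht
  refine IsGreatest.csSup_eq ⟨⟨v, ?_, by rw [hvt, hts]⟩, ?_⟩
  · exact (ksupNorm_eq_gauge d k v).trans_le (gauge_le_one_of_mem (subset_convexHull ℝ _ hv))
  · rintro _ ⟨w, hw, rfl⟩
    rw [ksupNorm_eq_gauge] at hw
    exact (hf w).symm.trans_le
      (le_of_gauge_convexHull_le_one (convexHull_kSparseBall_mem_nhds hk1) f hbound hw)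
end

section
/- Let Θ = {θ ∈ R^d : 0 < θ_i ≤ 1, Σ_i θ_i ≤ k} for k ∈ {1,…,d}. Then the Θ-norm ‖w‖_Θ = sqrt(inf_{θ∈Θ} Σ_i w_i²/θ_i) equals the k-support norm, i.e. its unit ball is the convex hull of {w : card(supp(w)) ≤ k, ‖w‖₂ ≤ 1}. -/
open Set Filter Topology
open scoped Finset

lemma Convex.sum_smul_mem_of_sum_le_one {𝕜 E J : Type*} [Field 𝕜] [LinearOrder 𝕜]
    [IsStrictOrderedRing 𝕜] [AddCommGroup E] [Module 𝕜 E] {s : Set E} (hs : Convex 𝕜 s)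
    (h0 : (0 : E) ∈ s) {t : Finset J} {c : J → 𝕜} {y : J → E} (hc0 : ∀ j ∈ t, 0 ≤ c j)
    (hc1 : ∑ j ∈ t, c j ≤ 1) (hy : ∀ j ∈ t, y j ∈ s) : ∑ j ∈ t, c j • y j ∈ s := by
  rcases (Finset.sum_nonneg hc0).eq_or_lt with hsum | hsum
  · rw [Finset.sum_eq_zero fun j hj => by
      rw [(Finset.sum_eq_zero_iff_of_nonneg hc0).1 hsum.symm j hj, zero_smul]]
    exact h0
  · rw [← smul_inv_smul₀ hsum.ne' (∑ j ∈ t, c j • y j)]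
    exact hs.smul_mem_of_zero_mem h0 (hs.centerMass_mem hc0 hsum hy) ⟨hsum.le, hc1⟩

lemma add_sq_div_add_le_s6 {a b x y s t : ℝ} (ha : 0 ≤ a) (hb : 0 ≤ b) (hab : a + b = 1)
    (hs : 0 < s) (ht : 0 < t) :
    (a * x + b * y) ^ 2 / (a * s + b * t) ≤ a * (x ^ 2 / s) + b * (y ^ 2 / t) := by
  have hst : 0 < a * s + b * t := by
    rcases ha.eq_or_lt with rfl | ha
    · simp_all
    · positivity
  rw [div_le_iff₀ hst]
  have hrhs : a * (x ^ 2 / s) + b * (y ^ 2 / t) =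
      (a * x ^ 2 * t + b * y ^ 2 * s) / (s * t) := by field_simp
  rw [hrhs, div_mul_eq_mul_div, le_div_iff₀ (by positivity)]
  nlinarith [mul_nonneg (mul_nonneg ha hb) (sq_nonneg (y * s - x * t))]

lemma eq_zero_of_mem_extremePoints_of_add_mem_of_sub_mem {E : Type*} [AddCommGroup E]
    [Module ℝ E] {A : Set E} {x v : E} (hx : x ∈ A.extremePoints ℝ) (h₁ : x + v ∈ A) (h₂ : x - v ∈ A) : v = 0 := by
  have hmid : x ∈ openSegment ℝ (x + v) (x - v) :=
    ⟨1 / 2, 1 / 2, by norm_num, by norm_num, by norm_num, by module⟩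
  simpa using (mem_extremePoints_iff_left.1 hx).2 _ h₁ _ h₂ hmid

lemma mul_div_sq_le {w θ γ : ℝ} (hθ : 0 ≤ θ) (hγ : 0 ≤ γ) (h : w ^ 2 ≤ θ * γ) :
    θ * (w / θ) ^ 2 ≤ γ := by
  rcases hθ.eq_or_lt with rfl | hθ
  · simpa using hγ
  · rw [show θ * (w / θ) ^ 2 = w ^ 2 / θ by field_simp, div_le_iff₀ hθ]
    linarith

section CappedSimplex

variable {ι : Type*}

lemma sum_eq_card_filter_ne_zero {s : Finset ι} {z : ι → ℝ} (hz : ∀ i ∈ s, z i = 0 ∨ z i = 1) :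
    ∑ i ∈ s, z i = #{i ∈ s | z i ≠ 0} := by
  rw [Finset.natCast_card_filter]
  exact Finset.sum_congr rfl fun i hi => by rcases hz i hi with h | h <;> simp [h]

variable [Fintype ι]

def cappedSimplex (ι : Type*) [Fintype ι] (k : ℕ) : Set (ι → ℝ) :=
  Icc 0 1 ∩ {θ | ∑ i, θ i ≤ (k : ℝ)}

lemma isCompact_cappedSimplex (k : ℕ) : IsCompact (cappedSimplex ι k) :=
  isCompact_Icc.inter_right (isClosed_le (by fun_prop) continuous_const)

lemma convex_cappedSimplex (k : ℕ) : Convex ℝ (cappedSimplex ι k) :=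
  (convex_Icc 0 1).inter <| convex_halfSpace_le
    ⟨fun _ _ => Finset.sum_add_distrib, fun _ _ => (Finset.mul_sum ..).symm⟩ _

lemma ncard_setOf_ne_zero_eq_sum {z : ι → ℝ} (hz : ∀ i, z i = 0 ∨ z i = 1) :
    ({i | z i ≠ 0}.ncard : ℝ) = ∑ i, z i := by
  classical
  rw [sum_eq_card_filter_ne_zero fun i _ => hz i, Set.ncard_eq_toFinset_card', Set.toFinset_ofPred]

variable {k : ℕ} {θ : ι → ℝ}

lemma add_smul_single_sub_single_mem_cappedSimplex [DecidableEq ι] (hθ : θ ∈ cappedSimplex ι k)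
    {i j : ι} (hij : i ≠ j) {t : ℝ} (hi : θ i + t ∈ Icc 0 1) (hj : θ j - t ∈ Icc 0 1) :
    θ + t • (Pi.single i 1 - Pi.single j 1) ∈ cappedSimplex ι k := by
  refine ⟨⟨fun l => ?_, fun l => ?_⟩, ?_⟩
  · rcases eq_or_ne l i with rfl | hli
    · simpa [hij] using hi.1
    rcases eq_or_ne l j with rfl | hlj
    · simpa [hli] using hj.1
    simpa [hli, hlj] using hθ.1.1 l
  · rcases eq_or_ne l i with rfl | hli
    · simpa [hij] using hi.2
    rcases eq_or_ne l j with rfl | hlj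
    · simpa [hli] using hj.2
    simpa [hli, hlj] using hθ.1.2 l
  · simpa [Finset.sum_add_distrib, Finset.sum_sub_distrib, ← Finset.mul_sum] using hθ.2

lemma add_smul_single_mem_cappedSimplex [DecidableEq ι] (hθ : θ ∈ cappedSimplex ι k) {i : ι} {t : ℝ}
    (hi : θ i + t ∈ Icc 0 1) (hs : ∑ l, θ l + t ≤ k) :
    θ + t • Pi.single i 1 ∈ cappedSimplex ι k := by
  refine ⟨⟨fun l => ?_, fun l => ?_⟩, ?_⟩
  · rcases eq_or_ne l i with rfl | hli
    · simpa using hi.1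
    simpa [hli] using hθ.1.1 l
  · rcases eq_or_ne l i with rfl | hli
    · simpa using hi.2
    simpa [hli] using hθ.1.2 l
  · simpa [Finset.sum_add_distrib, ← Finset.mul_sum] using hs

lemma notMem_extremePoints_cappedSimplex_of_two_fractional {i j : ι} (hij : i ≠ j)
    (hi : θ i ∈ Ioo 0 1) (hj : θ j ∈ Ioo 0 1) : θ ∉ (cappedSimplex ι k).extremePoints ℝ := by
  classical
  intro hθ
  set ε := min (min (θ i) (1 - θ i)) (min (θ j) (1 - θ j))
  have hε : 0 < ε := lt_min (lt_min hi.1 (by linarith [hi.2])) (lt_min hj.1 (by linarith [hj.2]))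
  have hεi : ε ≤ min (θ i) (1 - θ i) := min_le_left _ _
  have hεj : ε ≤ min (θ j) (1 - θ j) := min_le_right _ _
  simp only [le_min_iff] at hεi hεj
  have h_add := add_smul_single_sub_single_mem_cappedSimplex hθ.1 hij (t := ε)
    ⟨by linarith, by linarith⟩ ⟨by linarith, by linarith⟩
  have h_sub := add_smul_single_sub_single_mem_cappedSimplex hθ.1 hij (t := -ε)
    ⟨by linarith, by linarith⟩ ⟨by linarith, by linarith⟩
  rw [neg_smul, ← sub_eq_add_neg] at h_sub
  have := congr_fun (eq_zero_of_mem_extremePoints_of_add_mem_of_sub_mem hθ h_add h_sub) i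
  exact hε.ne' (by simpa [hij] using this)

lemma notMem_extremePoints_cappedSimplex_of_sum_lt {i : ι} (hi : θ i ∈ Ioo 0 1)
    (hs : ∑ l, θ l < k) : θ ∉ (cappedSimplex ι k).extremePoints ℝ := by
  classical
  intro hθ
  set ε := min (min (θ i) (1 - θ i)) (k - ∑ l, θ l)
  have hε : 0 < ε := lt_min (lt_min hi.1 (by linarith [hi.2])) (by linarith)
  have hεi : ε ≤ min (θ i) (1 - θ i) := min_le_left _ _
  have hεs : ε ≤ k - ∑ l, θ l := min_le_right _ _
  simp only [le_min_iff] at hεi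
  have h_add := add_smul_single_mem_cappedSimplex hθ.1 (t := ε)
    ⟨by linarith, by linarith⟩ (by linarith)
  have h_sub := add_smul_single_mem_cappedSimplex hθ.1 (t := -ε)
    ⟨by linarith, by linarith⟩ (by linarith)
  rw [neg_smul, ← sub_eq_add_neg] at h_sub
  have := congr_fun (eq_zero_of_mem_extremePoints_of_add_mem_of_sub_mem hθ h_add h_sub) i
  exact hε.ne' (by simpa using this)

lemma sum_lt_of_mem_cappedSimplex_of_forall_ne (hθ : θ ∈ cappedSimplex ι k) {i : ι}
    (hi : θ i ∈ Ioo 0 1) (hj : ∀ j ≠ i, θ j = 0 ∨ θ j = 1) : ∑ l, θ l < k := by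
  classical
  set m := #{l ∈ Finset.univ.erase i | θ l ≠ 0}
  have hsum : ∑ l, θ l = θ i + m := by
    rw [← Finset.add_sum_erase _ _ (Finset.mem_univ i),
      sum_eq_card_filter_ne_zero fun l hl => hj l (Finset.ne_of_mem_erase hl)]
  have hle : ∑ l, θ l ≤ k := hθ.2
  have hm : (m : ℝ) + 1 ≤ k := by
    have : (m : ℝ) < k := by linarith [hi.1]
    exact_mod_cast (Nat.cast_lt.1 this : m < k)
  linarith [hi.2]

lemma eq_zero_or_eq_one_of_mem_extremePoints_cappedSimplex
    (hθ : θ ∈ (cappedSimplex ι k).extremePoints ℝ) (i : ι) : θ i = 0 ∨ θ i = 1 := by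
  have hfrac : ∀ j, θ j = 0 ∨ θ j = 1 ∨ θ j ∈ Ioo 0 1 := fun j => by
    rcases (hθ.1.1.1 j).eq_or_lt with h | h₀
    · exact Or.inl h.symm
    rcases (hθ.1.1.2 j).eq_or_lt with h | h₁
    · exact Or.inr (Or.inl h)
    · exact Or.inr (Or.inr ⟨h₀, h₁⟩)
  rcases hfrac i with h | h | hi
  · exact Or.inl h
  · exact Or.inr h
  by_cases hj : ∃ j ≠ i, θ j ∈ Ioo 0 1
  · obtain ⟨j, hji, hj⟩ := hj
    exact (notMem_extremePoints_cappedSimplex_of_two_fractional hji.symm hi hj hθ).elim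
  · refine (notMem_extremePoints_cappedSimplex_of_sum_lt hi
      (sum_lt_of_mem_cappedSimplex_of_forall_ne hθ.1 hi fun j hji => ?_) hθ).elim
    rcases hfrac j with h | h | h
    exacts [Or.inl h, Or.inr h, (hj ⟨j, hji, h⟩).elim]

lemma cappedSimplex_subset_convexHull_binary :
    cappedSimplex ι k ⊆ convexHull ℝ (cappedSimplex ι k ∩ {θ | ∀ i, θ i = 0 ∨ θ i = 1}) := by
  have hfin : (cappedSimplex ι k ∩ {θ : ι → ℝ | ∀ i, θ i = 0 ∨ θ i = 1}).Finite :=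
    (Set.Finite.pi (t := fun _ => {0, 1}) fun _ => toFinite _).subset
      fun θ hθ i _ => hθ.2 i
  calc cappedSimplex ι k
      = closure (convexHull ℝ ((cappedSimplex ι k).extremePoints ℝ)) :=
        (closure_convexHull_extremePoints (isCompact_cappedSimplex k) (convex_cappedSimplex k)).symm
    _ ⊆ closure (convexHull ℝ (cappedSimplex ι k ∩ {θ | ∀ i, θ i = 0 ∨ θ i = 1})) :=
        closure_mono <| convexHull_mono fun θ hθ =>
          ⟨hθ.1, eq_zero_or_eq_one_of_mem_extremePoints_cappedSimplex hθ⟩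
    _ = _ := (hfin.isClosed_convexHull ℝ).closure_eq

end CappedSimplex

section SparseBall

variable {ι : Type*} [Fintype ι] {k : ℕ}

def sparseBall (ι : Type*) [Fintype ι] (k : ℕ) : Set (ι → ℝ) :=
  {w | {i | w i ≠ 0}.ncard ≤ k ∧ Real.sqrt (∑ i, w i ^ 2) ≤ 1}

lemma zero_mem_sparseBall : (0 : ι → ℝ) ∈ sparseBall ι k := by
  simp [sparseBall]

lemma exists_mem_sparseBall_smul_eq {v : ι → ℝ} (hv : {i | v i ≠ 0}.ncard ≤ k) :
    ∃ y ∈ sparseBall ι k, Real.sqrt (∑ i, v i ^ 2) • y = v := by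
  set N := Real.sqrt (∑ i, v i ^ 2)
  rcases eq_or_ne N 0 with hN | hN
  · refine ⟨0, zero_mem_sparseBall, ?_⟩
    have hsq := Real.sqrt_eq_zero'.1 hN
    rw [smul_zero, eq_comm]
    funext i
    exact (pow_eq_zero_iff two_ne_zero).1 <|
      (Finset.sum_eq_zero_iff_of_nonneg fun i _ => sq_nonneg (v i)).1
        (hsq.antisymm (Finset.sum_nonneg fun i _ => sq_nonneg (v i))) i (Finset.mem_univ i)
  · refine ⟨N⁻¹ • v, ⟨?_, ?_⟩, smul_inv_smul₀ hN v⟩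
    · simpa [hN] using hv
    · have : ∑ i, (N⁻¹ • v) i ^ 2 = N⁻¹ ^ 2 * ∑ i, v i ^ 2 := by
        simp [Finset.mul_sum, mul_pow]
      rw [this, Real.sqrt_mul (sq_nonneg _), Real.sqrt_sq (inv_nonneg.2 (Real.sqrt_nonneg _))]
      exact inv_mul_le_one

lemma sum_smul_mem_convexHull_sparseBall {J : Type*} [Fintype J] {μ : J → ℝ} {v : J → ι → ℝ}
    (hμ₀ : ∀ j, 0 ≤ μ j) (hμ₁ : ∑ j, μ j = 1) (hv : ∀ j, {i | v j i ≠ 0}.ncard ≤ k)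
    (henergy : ∑ j, μ j * ∑ i, v j i ^ 2 ≤ 1) :
    ∑ j, μ j • v j ∈ convexHull ℝ (sparseBall ι k) := by
  choose y hy hyv using fun j => exists_mem_sparseBall_smul_eq (hv j)
  have hN : ∑ j, μ j * Real.sqrt (∑ i, v j i ^ 2) ≤ 1 := by
    have hjensen := (convexOn_pow 2).map_sum_le (t := Finset.univ) (fun j _ => hμ₀ j) hμ₁
      (fun j _ => Real.sqrt_nonneg (∑ i, v j i ^ 2))
    have hsq : ∑ j, μ j * Real.sqrt (∑ i, v j i ^ 2) ^ 2 = ∑ j, μ j * ∑ i, v j i ^ 2 :=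
      Finset.sum_congr rfl fun j _ => by
        rw [Real.sq_sqrt (Finset.sum_nonneg fun i _ => sq_nonneg _)]
    simp only [smul_eq_mul, hsq] at hjensen
    exact (le_abs_self _).trans ((sq_le_one_iff_abs_le_one _).1 (hjensen.trans henergy))
  rw [Finset.sum_congr rfl fun j _ => by rw [← hyv j, smul_smul]]
  exact (convex_convexHull ℝ _).sum_smul_mem_of_sum_le_one
    (subset_convexHull ℝ _ zero_mem_sparseBall)
    (fun j _ => mul_nonneg (hμ₀ j) (Real.sqrt_nonneg _)) hN
    (fun j _ => subset_convexHull ℝ _ (hy j))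

end SparseBall

section LiftedBall

variable {ι : Type*} [Fintype ι] {k : ℕ}

/-- `w i ^ 2 ≤ θ i * γ i` stands for `w i ^ 2 / θ i ≤ γ i`, extended to `θ i = 0` so that the set
is closed. -/
def liftedBall (ι : Type*) [Fintype ι] (k : ℕ) : Set (ι → ℝ) :=
  {w | ∃ θ ∈ cappedSimplex ι k, ∃ γ ∈ cappedSimplex ι 1, ∀ i, w i ^ 2 ≤ θ i * γ i}

lemma isCompact_liftedBall : IsCompact (liftedBall ι k) := by
  have hC : IsCompact (Icc (-1) 1 ×ˢ cappedSimplex ι k ×ˢ cappedSimplex ι 1 ∩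
      {p : (ι → ℝ) × (ι → ℝ) × (ι → ℝ) | ∀ i, p.1 i ^ 2 ≤ p.2.1 i * p.2.2 i}) := by
    refine (isCompact_Icc.prod
      ((isCompact_cappedSimplex k).prod (isCompact_cappedSimplex 1))).inter_right ?_
    simp only [ofPred_forall]
    exact isClosed_iInter fun i => isClosed_le (by fun_prop) (by fun_prop)
  convert hC.image continuous_fst
  ext w
  constructor
  · rintro ⟨θ, hθ, γ, hγ, hw⟩
    have hw₁ : ∀ i, |w i| ≤ 1 := fun i => (sq_le_one_iff_abs_le_one _).1 <|
      (hw i).trans (mul_le_one₀ (hθ.1.2 i) (hγ.1.1 i) (hγ.1.2 i))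
    exact ⟨(w, θ, γ), ⟨⟨⟨fun i => (abs_le.1 (hw₁ i)).1, fun i => (abs_le.1 (hw₁ i)).2⟩, hθ, hγ⟩,
      hw⟩, rfl⟩
  · rintro ⟨⟨w, θ, γ⟩, ⟨⟨-, hθ, hγ⟩, hw⟩, rfl⟩
    exact ⟨θ, hθ, γ, hγ, hw⟩

lemma liftedBall_subset_convexHull_sparseBall :
    liftedBall ι k ⊆ convexHull ℝ (sparseBall ι k) := by
  rintro w ⟨θ, hθ, γ, hγ, hw⟩
  obtain ⟨J, _, μ, z, hμ₀, hμ₁, hz, hθz⟩ :=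
    mem_convexHull_iff_exists_fintype.1 (cappedSimplex_subset_convexHull_binary hθ)
  have hθ_apply : ∀ i, ∑ j, μ j * z j i = θ i := fun i => by
    rw [← hθz]
    simp [Finset.sum_apply]
  have hw_zero : ∀ i, θ i = 0 → w i = 0 := fun i h =>
    (pow_eq_zero_iff two_ne_zero).1 <| le_antisymm (by simpa [h] using hw i) (sq_nonneg _)
  set v : J → ι → ℝ := fun j i => z j i * (w i / θ i)
  have hw_eq : ∑ j, μ j • v j = w := by
    funext i
    simp only [Finset.sum_apply, Pi.smul_apply, smul_eq_mul, v, ← mul_assoc, ← Finset.sum_mul,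
      hθ_apply]
    exact mul_div_cancel_of_imp' (hw_zero i)
  have hv_supp : ∀ j, {i | v j i ≠ 0}.ncard ≤ k := by
    intro j
    have hsub : {i | v j i ≠ 0} ⊆ {i | z j i ≠ 0} := fun i hi h => hi (by simp [v, h])
    have hz_card : ({i | z j i ≠ 0}.ncard : ℝ) ≤ k :=
      (ncard_setOf_ne_zero_eq_sum (hz j).2).trans_le (hz j).1.2
    exact (Set.ncard_le_ncard hsub).trans (by exact_mod_cast hz_card)
  have henergy : ∑ j, μ j * ∑ i, v j i ^ 2 ≤ 1 := calc
    ∑ j, μ j * ∑ i, v j i ^ 2 = ∑ i, θ i * (w i / θ i) ^ 2 := by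
      simp_rw [Finset.mul_sum]
      rw [Finset.sum_comm]
      refine Finset.sum_congr rfl fun i _ => ?_
      nth_rw 1 [← hθ_apply i]
      rw [Finset.sum_mul]
      refine Finset.sum_congr rfl fun j _ => ?_
      rcases (hz j).2 i with h | h <;> simp [v, h]
    _ ≤ ∑ i, γ i := Finset.sum_le_sum fun i _ => mul_div_sq_le (hθ.1.1 i) (hγ.1.1 i) (hw i)
    _ ≤ 1 := hγ.2.trans_eq Nat.cast_one
  exact hw_eq ▸ sum_smul_mem_convexHull_sparseBall hμ₀ hμ₁ hv_supp henergy

end LiftedBall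

section ThetaNorm

variable {d k : ℕ}

lemma thetaNorm_le_one_iff {Θ : Set (Fin d → ℝ)} (hne : Θ.Nonempty)
    (hpos : ∀ θ ∈ Θ, ∀ i, 0 < θ i) (w : Fin d → ℝ) :
    thetaNorm Θ w ≤ 1 ↔ ∀ r > 1, ∃ θ ∈ Θ, ∑ i, w i ^ 2 / θ i ≤ r := by
  have : Nonempty Θ := hne.to_subtype
  have hbdd : BddBelow (range fun θ : Θ => ∑ i, w i ^ 2 / (θ : Fin d → ℝ) i) :=
    ⟨0, by
      rintro _ ⟨θ, rfl⟩
      exact Finset.sum_nonneg fun i _ => div_nonneg (sq_nonneg _) (hpos θ θ.2 i).le⟩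
  rw [thetaNorm, Real.sqrt_le_one]
  constructor
  · intro h r hr
    obtain ⟨θ, hθ⟩ := exists_lt_of_ciInf_lt (h.trans_lt hr)
    exact ⟨θ, θ.2, hθ.le⟩
  · intro h
    refine le_of_forall_gt_imp_ge_of_dense fun r hr => ?_
    obtain ⟨θ, hθ, hθr⟩ := h r hr
    exact (ciInf_le hbdd ⟨θ, hθ⟩).trans hθr

lemma convex_setOf_thetaNorm_le_one {Θ : Set (Fin d → ℝ)} (hΘ : Convex ℝ Θ) (hne : Θ.Nonempty)
    (hpos : ∀ θ ∈ Θ, ∀ i, 0 < θ i) : Convex ℝ {w | thetaNorm Θ w ≤ 1} := by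
  intro w₁ hw₁ w₂ hw₂ a b ha hb hab
  simp only [mem_ofPred_eq, thetaNorm_le_one_iff hne hpos] at hw₁ hw₂ ⊢
  intro r hr
  obtain ⟨θ₁, hθ₁, h₁⟩ := hw₁ r hr
  obtain ⟨θ₂, hθ₂, h₂⟩ := hw₂ r hr
  refine ⟨a • θ₁ + b • θ₂, hΘ hθ₁ hθ₂ ha hb hab, ?_⟩
  calc ∑ i, (a • w₁ + b • w₂) i ^ 2 / (a • θ₁ + b • θ₂) i
      ≤ ∑ i, (a * (w₁ i ^ 2 / θ₁ i) + b * (w₂ i ^ 2 / θ₂ i)) :=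
        Finset.sum_le_sum fun i _ => add_sq_div_add_le_s6 ha hb hab (hpos _ hθ₁ i) (hpos _ hθ₂ i)
    _ = a * ∑ i, w₁ i ^ 2 / θ₁ i + b * ∑ i, w₂ i ^ 2 / θ₂ i := by
        rw [Finset.sum_add_distrib, Finset.mul_sum, Finset.mul_sum]
    _ ≤ a * r + b * r := by gcongr
    _ = r := by rw [← add_mul, hab, one_mul]

def thetaSet (d k : ℕ) : Set (Fin d → ℝ) :=
  {θ : Fin d → ℝ | (∀ i, 0 < θ i ∧ θ i ≤ 1) ∧ ∑ i, θ i ≤ (k : ℝ)}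

lemma thetaSet_subset_cappedSimplex : thetaSet d k ⊆ cappedSimplex (Fin d) k :=
  fun _ hθ => ⟨⟨fun i => (hθ.1 i).1.le, fun i => (hθ.1 i).2⟩, hθ.2⟩

lemma smul_add_smul_mem_thetaSet {θ θ₀ : Fin d → ℝ} (hθ : θ ∈ cappedSimplex (Fin d) k)
    (hθ₀ : θ₀ ∈ thetaSet d k) {a b : ℝ} (ha : 0 ≤ a) (hb : 0 < b) (hab : a + b = 1) :
    a • θ + b • θ₀ ∈ thetaSet d k := by
  have hP := convex_cappedSimplex k hθ (thetaSet_subset_cappedSimplex hθ₀) ha hb.le hab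
  refine ⟨fun i => ⟨?_, hP.1.2 i⟩, hP.2⟩
  exact add_pos_of_nonneg_of_pos (mul_nonneg ha (hθ.1.1 i)) (mul_pos hb (hθ₀.1 i).1)

lemma convex_thetaSet : Convex ℝ (thetaSet d k) :=
  convex_iff_forall_pos.2 fun _ hθ₁ _ hθ₂ _ _ ha hb hab =>
    smul_add_smul_mem_thetaSet (thetaSet_subset_cappedSimplex hθ₁) hθ₂ ha.le hb hab

lemma const_inv_mem_thetaSet (hk : 1 ≤ k) : (fun _ => (d : ℝ)⁻¹) ∈ thetaSet d k := by
  refine ⟨fun i => ⟨inv_pos.2 (by exact_mod_cast i.pos),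
    inv_le_one_of_one_le₀ (by exact_mod_cast i.pos)⟩, ?_⟩
  simp only [Finset.sum_const, Finset.card_univ, Fintype.card_fin, nsmul_eq_mul]
  exact mul_inv_le_one.trans (by exact_mod_cast hk)

lemma thetaNorm_thetaSet_le_one_iff (hk : 1 ≤ k) (w : Fin d → ℝ) :
    thetaNorm (thetaSet d k) w ≤ 1 ↔ ∀ r > 1, ∃ θ ∈ thetaSet d k, ∑ i, w i ^ 2 / θ i ≤ r :=
  thetaNorm_le_one_iff ⟨_, const_inv_mem_thetaSet hk⟩ (fun _ hθ i => (hθ.1 i).1) w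

lemma sparseBall_subset_setOf_thetaNorm_le_one (hk : 1 ≤ k) :
    sparseBall (Fin d) k ⊆ {w | thetaNorm (thetaSet d k) w ≤ 1} := by
  rintro u ⟨hsupp, hnorm⟩
  rw [mem_ofPred_eq, thetaNorm_thetaSet_le_one_iff hk]
  intro r hr
  set θ : Fin d → ℝ := fun i => if u i = 0 then 0 else 1
  have hθ01 : ∀ i, θ i = 0 ∨ θ i = 1 := fun i => by by_cases h : u i = 0 <;> simp [θ, h]
  have hθ : θ ∈ cappedSimplex (Fin d) k := by
    refine ⟨⟨fun i => ?_, fun i => ?_⟩, ?_⟩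
    · rcases hθ01 i with h | h <;> simp [h]
    · rcases hθ01 i with h | h <;> simp [h]
    · have hsupp' : {i | θ i ≠ 0} = {i | u i ≠ 0} := by ext i; by_cases h : u i = 0 <;> simp [θ, h]
      rw [mem_ofPred_eq, ← ncard_setOf_ne_zero_eq_sum hθ01, hsupp']
      exact_mod_cast hsupp
  have hr₀ : 0 < r⁻¹ := inv_pos.2 (by linarith)
  refine ⟨r⁻¹ • θ + (1 - r⁻¹) • fun _ => (d : ℝ)⁻¹,
    smul_add_smul_mem_thetaSet hθ (const_inv_mem_thetaSet hk) hr₀.le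
      (sub_pos.2 (inv_lt_one_of_one_lt₀ hr)) (by ring), ?_⟩
  calc ∑ i, u i ^ 2 / (r⁻¹ • θ + (1 - r⁻¹) • fun _ => (d : ℝ)⁻¹ : Fin d → ℝ) i
      ≤ ∑ i, u i ^ 2 / r⁻¹ := by
        refine Finset.sum_le_sum fun i _ => ?_
        by_cases h : u i = 0
        · simp [h]
        · refine div_le_div_of_nonneg_left (sq_nonneg _) hr₀ ?_
          have : 0 ≤ (1 - r⁻¹) * (d : ℝ)⁻¹ :=
            mul_nonneg (sub_nonneg.2 (inv_le_one_of_one_le₀ hr.le)) (by positivity)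
          simpa [θ, h] using this
    _ = r * ∑ i, u i ^ 2 := by rw [← Finset.sum_div, div_inv_eq_mul, mul_comm]
    _ ≤ r := mul_le_of_le_one_right (by linarith) (Real.sqrt_le_one.1 hnorm)

lemma setOf_thetaNorm_le_one_subset_liftedBall (hk : 1 ≤ k) :
    {w | thetaNorm (thetaSet d k) w ≤ 1} ⊆ liftedBall (Fin d) k := by
  intro w hw
  rw [mem_ofPred_eq, thetaNorm_thetaSet_le_one_iff hk] at hw
  have hscaled : ∀ r ∈ Ioi (1 : ℝ), r⁻¹ • w ∈ liftedBall (Fin d) k := by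
    intro r hr
    obtain ⟨θ, hθ, hθr⟩ := hw (r ^ 2) (one_lt_pow₀ hr two_ne_zero)
    have hθ₀ : ∀ i, 0 < θ i := fun i => (hθ.1 i).1
    set γ : Fin d → ℝ := fun i => (r⁻¹ * w i) ^ 2 / θ i
    have hγ₀ : ∀ i, 0 ≤ γ i := fun i => div_nonneg (sq_nonneg _) (hθ₀ i).le
    have hγ₁ : ∑ i, γ i ≤ 1 := calc
      ∑ i, γ i = (∑ i, w i ^ 2 / θ i) / r ^ 2 := by
        simp only [γ, Finset.sum_div]
        refine Finset.sum_congr rfl fun i _ => ?_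
        field_simp
      _ ≤ 1 := (div_le_one (pow_pos (zero_lt_one.trans hr) 2)).2 hθr
    refine ⟨θ, thetaSet_subset_cappedSimplex hθ, γ, ⟨⟨hγ₀, fun i => ?_⟩, ?_⟩, fun i => ?_⟩
    · exact (Finset.single_le_sum (fun j _ => hγ₀ j) (Finset.mem_univ i)).trans hγ₁
    · exact hγ₁.trans_eq Nat.cast_one.symm
    · simp only [γ, Pi.smul_apply, smul_eq_mul]
      rw [mul_div_cancel₀ _ (hθ₀ i).ne']
  have hlim : Tendsto (fun r : ℝ => r⁻¹ • w) (𝓝[>] 1) (𝓝 w) := by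
    have : ContinuousAt (fun r : ℝ => r⁻¹ • w) 1 :=
      (continuousAt_inv₀ one_ne_zero).smul continuousAt_const
    simpa using this.tendsto.mono_left nhdsWithin_le_nhds
  exact isCompact_liftedBall.isClosed.mem_of_tendsto hlim (eventually_nhdsWithin_of_forall hscaled)

end ThetaNorm

theorem theta_norm_eq_ksup_general {d k : ℕ} (hk1 : 1 ≤ k) :
    {w : Fin d → ℝ |
        thetaNorm {θ : Fin d → ℝ | (∀ i, 0 < θ i ∧ θ i ≤ 1) ∧ ∑ i, θ i ≤ (k : ℝ)} w ≤ 1} =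
      convexHull ℝ
        {w : Fin d → ℝ | {i | w i ≠ 0}.ncard ≤ k ∧ Real.sqrt (∑ i, w i ^ 2) ≤ 1} :=
  ((setOf_thetaNorm_le_one_subset_liftedBall hk1).trans
    liftedBall_subset_convexHull_sparseBall).antisymm <|
      convexHull_min (sparseBall_subset_setOf_thetaNorm_le_one hk1) <|
        convex_setOf_thetaNorm_le_one convex_thetaSet ⟨_, const_inv_mem_thetaSet hk1⟩
          fun _ hθ i => (hθ.1 i).1

theorem theta_norm_eq_ksup {d k : ℕ} (hk1 : 1 ≤ k) (hkd : k ≤ d) :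
    {w : Fin d → ℝ |
        thetaNorm {θ : Fin d → ℝ | (∀ i, 0 < θ i ∧ θ i ≤ 1) ∧ ∑ i, θ i ≤ (k : ℝ)} w ≤ 1} =
      convexHull ℝ
        {w : Fin d → ℝ | {i | w i ≠ 0}.ncard ≤ k ∧ Real.sqrt (∑ i, w i ^ 2) ≤ 1} :=
  theta_norm_eq_ksup_general hk1
end

section
/- Let Θ be a convex bounded subset of the positive orthant in R^d, α, β > 0, and Φ = {φ : φ_i = α + β θ_i, θ ∈ Θ}. Then for every w ∈ R^d, ‖w‖²_Φ = min_{z∈R^d} ( (1/α)‖w-z‖₂² + (1/β)‖z‖²_Θ ). -/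
/-!
Coordinatewise, `w² / (α + β t) = min_z ((w - z)² / α + z² / (β t))`, attained at
`z = w β t / (α + β t)`. Summing and taking the infimum over `θ ∈ Θ` on both sides (the two
infima commute) gives the lower bound. For attainment, minimise `θ ↦ ∑ w_i² / (α + β θ_i)` over
the compact closure of `Θ` and take the corresponding `z`; its `Θ`-norm is bounded by its value
at the limit point.
-/

open Set

theorem sq_div_add_le_add_sq_div (w z : ℝ) {a c : ℝ} (ha : 0 < a) (hc : 0 < c) :
    w ^ 2 / (a + c) ≤ (w - z) ^ 2 / a + z ^ 2 / c := by
  rw [div_add_div _ _ ha.ne' hc.ne', div_le_div_iff₀ (by positivity) (by positivity)]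
  nlinarith [sq_nonneg ((w - z) * c - z * a)]

theorem add_sq_div_eq_sq_div_add (w : ℝ) {a c : ℝ} (ha : 0 < a) (hc : 0 ≤ c) :
    (w - w * c / (a + c)) ^ 2 / a + (w * c / (a + c)) ^ 2 / c = w ^ 2 / (a + c) := by
  rcases hc.eq_or_lt with rfl | hc
  · simp
  · field_simp
    ring

section Affine

variable {ι : Type*} [Fintype ι] {α β : ℝ}

theorem sum_sq_div_affine_le (hα : 0 < α) (hβ : 0 < β) (w z θ : ι → ℝ) (hθ : ∀ i, 0 < θ i) :
    ∑ i, w i ^ 2 / (α + β * θ i) ≤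
      (1 / α) * ∑ i, (w i - z i) ^ 2 + (1 / β) * ∑ i, z i ^ 2 / θ i := by
  rw [Finset.mul_sum, Finset.mul_sum, ← Finset.sum_add_distrib]
  refine Finset.sum_le_sum fun i _ => ?_
  refine (sq_div_add_le_add_sq_div (w i) (z i) hα (mul_pos hβ (hθ i))).trans_eq ?_
  ring

theorem sum_sq_div_affine_eq (hα : 0 < α) (hβ : 0 < β) (w θ : ι → ℝ) (hθ : ∀ i, 0 ≤ θ i) :
    (1 / α) * ∑ i, (w i - w i * (β * θ i) / (α + β * θ i)) ^ 2 +
        (1 / β) * ∑ i, (w i * (β * θ i) / (α + β * θ i)) ^ 2 / θ i =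
      ∑ i, w i ^ 2 / (α + β * θ i) := by
  rw [Finset.mul_sum, Finset.mul_sum, ← Finset.sum_add_distrib]
  refine Finset.sum_congr rfl fun i _ => ?_
  rw [← add_sq_div_eq_sq_div_add (w i) hα (mul_nonneg hβ.le (hθ i))]
  ring

theorem exists_isMinOn_sum_sq_div_affine (hα : 0 < α) (hβ : 0 < β) (w : ι → ℝ)
    {K : Set (ι → ℝ)} (hK : IsCompact K) (hne : K.Nonempty) (hK0 : ∀ θ ∈ K, ∀ i, 0 ≤ θ i) :
    ∃ θ ∈ K, IsMinOn (fun θ : ι → ℝ => ∑ i, w i ^ 2 / (α + β * θ i)) K θ :=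
  hK.exists_isMinOn hne <| continuousOn_finsetSum _ fun i _ =>
    continuousOn_const.div (by fun_prop) fun θ hθ => by have := hK0 θ hθ i; positivity

end Affine

theorem nonneg_of_mem_closure {ι : Type*} {Θ : Set (ι → ℝ)} (hΘ : ∀ θ ∈ Θ, ∀ i, 0 ≤ θ i)
    {θ : ι → ℝ} (hθ : θ ∈ closure Θ) (i : ι) : 0 ≤ θ i :=
  closure_minimal (fun θ' hθ' => hΘ θ' hθ' i) (isClosed_le continuous_const (continuous_apply i)) hθ

section ThetaNorm

variable {d : ℕ} {Θ : Set (Fin d → ℝ)}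

theorem sq_thetaNorm (hΘ : ∀ θ ∈ Θ, ∀ i, 0 ≤ θ i) (z : Fin d → ℝ) :
    thetaNorm Θ z ^ 2 = ⨅ θ : Θ, ∑ i, z i ^ 2 / (θ : Fin d → ℝ) i :=
  Real.sq_sqrt <| Real.iInf_nonneg fun θ =>
    Finset.sum_nonneg fun i _ => div_nonneg (sq_nonneg _) (hΘ θ θ.2 i)

theorem sq_thetaNorm_le (hΘ : ∀ θ ∈ Θ, ∀ i, 0 ≤ θ i) (z : Fin d → ℝ) {θ : Fin d → ℝ}
    (hθ : θ ∈ Θ) : thetaNorm Θ z ^ 2 ≤ ∑ i, z i ^ 2 / θ i := by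
  rw [sq_thetaNorm hΘ]
  refine ciInf_le ⟨0, forall_mem_range.2 fun θ => ?_⟩ (⟨θ, hθ⟩ : Θ)
  exact Finset.sum_nonneg fun i _ => div_nonneg (sq_nonneg _) (hΘ θ θ.2 i)

theorem le_sq_thetaNorm (hΘ : ∀ θ ∈ Θ, ∀ i, 0 ≤ θ i) (hne : Θ.Nonempty) (z : Fin d → ℝ) {c : ℝ}
    (h : ∀ θ ∈ Θ, c ≤ ∑ i, z i ^ 2 / θ i) : c ≤ thetaNorm Θ z ^ 2 := by
  have := hne.to_subtype
  rw [sq_thetaNorm hΘ]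
  exact le_ciInf fun θ => h θ θ.2

/-- At a coordinate where `θ i = 0` the term is the junk value `0 / 0 = 0`, which is why `z i = 0`
is required there: it keeps the sum continuous at `θ`. -/
theorem sq_thetaNorm_le_of_mem_closure (hΘ : ∀ θ ∈ Θ, ∀ i, 0 ≤ θ i) {z θ : Fin d → ℝ}
    (hθ : θ ∈ closure Θ) (hz : ∀ i, θ i = 0 → z i = 0) :
    thetaNorm Θ z ^ 2 ≤ ∑ i, z i ^ 2 / θ i := by
  have hcont : ContinuousAt (fun θ' : Fin d → ℝ => ∑ i, z i ^ 2 / θ' i) θ := by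
    refine tendsto_finsetSum _ fun i _ => ?_
    rcases (nonneg_of_mem_closure hΘ hθ i).eq_or_lt with h0 | h0
    · simp only [hz i h0.symm, ne_eq, OfNat.ofNat_ne_zero, not_false_eq_true, zero_pow, zero_div]
      exact tendsto_const_nhds
    · exact continuousAt_const.div (continuous_apply i).continuousAt h0.ne'
  exact closure_minimal (image_subset_iff.2 fun θ' hθ' => sq_thetaNorm_le hΘ z hθ') isClosed_Ici
    (hcont.continuousWithinAt.mem_closure_image hθ)

end ThetaNorm

section Moreau

variable {d : ℕ} {Θ : Set (Fin d → ℝ)} {α β : ℝ}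

theorem nonneg_of_mem_affine_image (hα : 0 < α) (hβ : 0 < β) (hΘ : ∀ θ ∈ Θ, ∀ i, 0 ≤ θ i) :
    ∀ φ ∈ (fun θ : Fin d → ℝ => fun i => α + β * θ i) '' Θ, ∀ i, 0 ≤ φ i := by
  rintro _ ⟨θ, hθ, rfl⟩ i
  have := hΘ θ hθ i
  positivity

theorem sq_thetaNorm_affine_image_le (hne : Θ.Nonempty) (hpos : ∀ θ ∈ Θ, ∀ i, 0 < θ i)
    (hα : 0 < α) (hβ : 0 < β) (w z : Fin d → ℝ) :
    thetaNorm ((fun θ : Fin d → ℝ => fun i => α + β * θ i) '' Θ) w ^ 2 ≤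
      (1 / α) * ∑ i, (w i - z i) ^ 2 + (1 / β) * thetaNorm Θ z ^ 2 := by
  have hΘ : ∀ θ ∈ Θ, ∀ i, 0 ≤ θ i := fun θ hθ i => (hpos θ hθ i).le
  set L := thetaNorm ((fun θ : Fin d → ℝ => fun i => α + β * θ i) '' Θ) w ^ 2
  set c := (1 / α) * ∑ i, (w i - z i) ^ 2
  have key : ∀ θ ∈ Θ, β * (L - c) ≤ ∑ i, z i ^ 2 / θ i := by
    intro θ hθ
    have hL : L ≤ ∑ i, w i ^ 2 / (α + β * θ i) :=
      sq_thetaNorm_le (nonneg_of_mem_affine_image hα hβ hΘ) w (mem_image_of_mem _ hθ)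
    have := hL.trans (sum_sq_div_affine_le hα hβ w z θ (hpos θ hθ))
    exact (le_div_iff₀' hβ).1 (by linarith [one_div_mul_eq_div β (∑ i, z i ^ 2 / θ i)])
  have := (le_div_iff₀' hβ).2 (le_sq_thetaNorm hΘ hne z key)
  linarith [one_div_mul_eq_div β (thetaNorm Θ z ^ 2)]

end Moreau

theorem phi_norm_moreau_general {d : ℕ} (Θ : Set (Fin d → ℝ)) (hne : Θ.Nonempty)
    (hbdd : Bornology.IsBounded Θ)
    (hpos : ∀ θ ∈ Θ, ∀ i, 0 < θ i) (α β : ℝ) (hα : 0 < α) (hβ : 0 < β)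
    (w : Fin d → ℝ) :
    IsLeast {x : ℝ | ∃ z : Fin d → ℝ,
        x = (1 / α) * ∑ i, (w i - z i) ^ 2 + (1 / β) * (thetaNorm Θ z) ^ 2}
      ((thetaNorm ((fun θ : Fin d → ℝ => fun i => α + β * θ i) '' Θ) w) ^ 2) := by
  have hΘ : ∀ θ ∈ Θ, ∀ i, 0 ≤ θ i := fun θ hθ i => (hpos θ hθ i).le
  obtain ⟨θ₀, hθ₀, hmin⟩ := exists_isMinOn_sum_sq_div_affine hα hβ w hbdd.isCompact_closure
    hne.closure fun θ => nonneg_of_mem_closure hΘ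
  set z : Fin d → ℝ := fun i => w i * (β * θ₀ i) / (α + β * θ₀ i)
  have hz : ∀ i, θ₀ i = 0 → z i = 0 := fun i h => by simp [z, h]
  refine ⟨⟨z, le_antisymm (sq_thetaNorm_affine_image_le hne hpos hα hβ w z) ?_⟩, ?_⟩
  · calc (1 / α) * ∑ i, (w i - z i) ^ 2 + (1 / β) * thetaNorm Θ z ^ 2
        ≤ (1 / α) * ∑ i, (w i - z i) ^ 2 + (1 / β) * ∑ i, z i ^ 2 / θ₀ i := by
          gcongr
          exact sq_thetaNorm_le_of_mem_closure hΘ hθ₀ hz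
      _ = ∑ i, w i ^ 2 / (α + β * θ₀ i) :=
          sum_sq_div_affine_eq hα hβ w θ₀ (nonneg_of_mem_closure hΘ hθ₀)
      _ ≤ _ := le_sq_thetaNorm (nonneg_of_mem_affine_image hα hβ hΘ) (hne.image _) w <| by
          rintro _ ⟨θ, hθ, rfl⟩
          exact hmin (subset_closure hθ)
  · rintro _ ⟨z, rfl⟩
    exact sq_thetaNorm_affine_image_le hne hpos hα hβ w z

theorem phi_norm_moreau {d : ℕ} (Θ : Set (Fin d → ℝ)) (hne : Θ.Nonempty)
    (hconv : Convex ℝ Θ) (hbdd : Bornology.IsBounded Θ)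
    (hpos : ∀ θ ∈ Θ, ∀ i, 0 < θ i) (α β : ℝ) (hα : 0 < α) (hβ : 0 < β)
    (w : Fin d → ℝ) :
    IsLeast {x : ℝ | ∃ z : Fin d → ℝ,
        x = (1 / α) * ∑ i, (w i - z i) ^ 2 + (1 / β) * (thetaNorm Θ z) ^ 2}
      ((thetaNorm ((fun θ : Fin d → ℝ => fun i => α + β * θ i) '' Θ) w) ^ 2) :=
  phi_norm_moreau_general Θ hne hbdd hpos α β hα hβ w
end

section
/- Let 0 < a < b and c = k(b-a) + da for k ∈ {1,…,d}. Then the box-norm with parameters (a,b,c) satisfies ‖w‖²_box = min_{z∈R^d} ( (1/a)‖w-z‖₂² + (1/(b-a))‖z‖²_(k) ) for every w ∈ R^d. -/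
/-!
Coordinatewise, `w² / (a + s) = min_z ((w - z)² / a + z² / s)`, the minimum being attained at
`z = w s / (a + s)`. The box `{a ≤ θ ≤ b, ∑ θ ≤ k (b - a) + d a}` is the image of the closure of
the `k`-support set `{0 < φ ≤ 1, ∑ φ ≤ k}` under `φ ↦ a + (b - a) φ`. Summing the coordinatewise
inequality and taking infima over `φ` gives `≤` for every `z`. Conversely, the box infimum is
attained at some `θ` by compactness; the matching `z` attains it, because the boundary point
`(θ - a) / (b - a)` is a limit of points of the `k`-support set along a segment from its centre.
-/

open Filter Topology

theorem sq_div_add_le {a s : ℝ} (w z : ℝ) (ha : 0 < a) (hs : 0 < s) :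
    w ^ 2 / (a + s) ≤ (w - z) ^ 2 / a + z ^ 2 / s := by
  rw [div_add_div _ _ ha.ne' hs.ne', div_le_div_iff₀ (by positivity) (by positivity)]
  nlinarith [sq_nonneg (s * w - (a + s) * z)]

theorem sq_div_add_eq {a s : ℝ} (w : ℝ) (ha : 0 < a) (hs : 0 ≤ s) :
    (w - w * s / (a + s)) ^ 2 / a + (w * s / (a + s)) ^ 2 / s = w ^ 2 / (a + s) := by
  rcases hs.eq_or_lt with rfl | hs
  · simp
  · field_simp
    ring

theorem sum_sq_sub_div_add_sum_sq_div {d : ℕ} (a t : ℝ) (w z φ : Fin d → ℝ) :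
    ∑ i, ((w i - z i) ^ 2 / a + z i ^ 2 / (t * φ i)) =
      1 / a * ∑ i, (w i - z i) ^ 2 + 1 / t * ∑ i, z i ^ 2 / φ i := by
  simp only [Finset.sum_add_distrib, Finset.mul_sum, div_mul_eq_div_div_swap, one_div_mul_eq_div]

section thetaNorm

variable {d : ℕ} {Θ : Set (Fin d → ℝ)}

theorem thetaNorm_sq (hΘ : ∀ θ ∈ Θ, ∀ i, 0 ≤ θ i) (w : Fin d → ℝ) :
    thetaNorm Θ w ^ 2 = ⨅ θ : Θ, ∑ i, w i ^ 2 / (θ : Fin d → ℝ) i :=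
  Real.sq_sqrt <| Real.iInf_nonneg fun θ =>
    Finset.sum_nonneg fun i _ => div_nonneg (sq_nonneg _) (hΘ θ θ.2 i)

theorem thetaNorm_sq_le (hΘ : ∀ θ ∈ Θ, ∀ i, 0 ≤ θ i) {θ : Fin d → ℝ} (hθ : θ ∈ Θ)
    (w : Fin d → ℝ) : thetaNorm Θ w ^ 2 ≤ ∑ i, w i ^ 2 / θ i := by
  rw [thetaNorm_sq hΘ]
  refine ciInf_le ⟨0, ?_⟩ (⟨θ, hθ⟩ : Θ)
  rintro _ ⟨θ, rfl⟩
  exact Finset.sum_nonneg fun i _ => div_nonneg (sq_nonneg _) (hΘ θ θ.2 i)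

theorem le_thetaNorm_sq (hΘ : ∀ θ ∈ Θ, ∀ i, 0 ≤ θ i) (hne : Θ.Nonempty) {w : Fin d → ℝ}
    {x : ℝ} (h : ∀ θ ∈ Θ, x ≤ ∑ i, w i ^ 2 / θ i) : x ≤ thetaNorm Θ w ^ 2 := by
  have := hne.to_subtype
  rw [thetaNorm_sq hΘ]
  exact le_ciInf fun θ => h θ θ.2

theorem exists_thetaNorm_sq_eq (hc : IsCompact Θ) (hne : Θ.Nonempty)
    (hΘ : ∀ θ ∈ Θ, ∀ i, 0 < θ i) (w : Fin d → ℝ) :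
    ∃ θ ∈ Θ, thetaNorm Θ w ^ 2 = ∑ i, w i ^ 2 / θ i := by
  have hcont : ContinuousOn (fun θ : Fin d → ℝ => ∑ i, w i ^ 2 / θ i) Θ :=
    continuousOn_finsetSum _ fun i _ => continuousOn_const.div (continuous_apply i).continuousOn
      fun θ hθ => (hΘ θ hθ i).ne'
  obtain ⟨θ, hθ, hmin⟩ := hc.exists_isMinOn hne hcont
  have hΘ₀ : ∀ θ ∈ Θ, ∀ i, 0 ≤ θ i := fun θ hθ i => (hΘ θ hθ i).le
  exact ⟨θ, hθ, (thetaNorm_sq_le hΘ₀ hθ w).antisymm (le_thetaNorm_sq hΘ₀ hne hmin)⟩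

/-- Here `φ` may lie on the boundary of `Θ`; on the coordinates where `φ` vanishes, so does `z`,
and the summand is `0 / 0 = 0`. -/
theorem thetaNorm_sq_le_of_openSegment_subset (hΘ : ∀ θ ∈ Θ, ∀ i, 0 ≤ θ i)
    {φ ψ z : Fin d → ℝ} (hφ : 0 ≤ φ) (hψ : 0 ≤ ψ) (hz : ∀ i, φ i = 0 → z i = 0)
    (hseg : openSegment ℝ φ ψ ⊆ Θ) : thetaNorm Θ z ^ 2 ≤ ∑ i, z i ^ 2 / φ i := by
  have hscaled : ∀ ε ∈ Set.Ioo (0 : ℝ) 1,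
      (1 - ε) * thetaNorm Θ z ^ 2 ≤ ∑ i, z i ^ 2 / φ i := by
    rintro ε ⟨hε₀, hε₁⟩
    have hmem : (1 - ε) • φ + ε • ψ ∈ Θ :=
      hseg ((openSegment_eq_image ℝ φ ψ).symm ▸ ⟨ε, ⟨hε₀, hε₁⟩, rfl⟩)
    refine (mul_le_mul_of_nonneg_left (thetaNorm_sq_le hΘ hmem z) (by linarith)).trans ?_
    rw [Finset.mul_sum]
    refine Finset.sum_le_sum fun i _ => ?_
    rcases (hφ i).eq_or_lt with hφi | hφi
    · simp [hz i hφi.symm]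
    · have hle : (1 - ε) * φ i ≤ ((1 - ε) • φ + ε • ψ) i := by
        simpa using mul_nonneg hε₀.le (hψ i)
      calc (1 - ε) * (z i ^ 2 / ((1 - ε) • φ + ε • ψ) i)
          ≤ (1 - ε) * (z i ^ 2 / ((1 - ε) * φ i)) := by
            gcongr
            exact mul_pos (by linarith) hφi
        _ = z i ^ 2 / φ i := by field_simp [show 1 - ε ≠ 0 by linarith]
  have hlim : Tendsto (fun ε : ℝ => (1 - ε) * thetaNorm Θ z ^ 2) (𝓝[>] 0)
      (𝓝 (thetaNorm Θ z ^ 2)) := by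
    refine tendsto_nhdsWithin_of_tendsto_nhds ?_
    convert ((continuous_const.sub continuous_id).mul continuous_const).tendsto
      (f := fun ε : ℝ => (1 - ε) * thetaNorm Θ z ^ 2) 0 using 2
    simp
  exact le_of_tendsto hlim (eventually_of_mem (Ioo_mem_nhdsGT one_pos) hscaled)

end thetaNorm

section moreau

variable {d : ℕ} {Θ Θ' : Set (Fin d → ℝ)} {a t : ℝ}

theorem thetaNorm_sq_le_moreau (ha : 0 < a) (ht : 0 < t) (hΘ : ∀ φ ∈ Θ, ∀ i, 0 < φ i)
    (hne : Θ.Nonempty) (hΘ' : ∀ θ ∈ Θ', ∀ i, 0 ≤ θ i)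
    (hmap : ∀ φ ∈ Θ, (fun i => a + t * φ i) ∈ Θ') (w z : Fin d → ℝ) :
    thetaNorm Θ' w ^ 2 ≤ 1 / a * ∑ i, (w i - z i) ^ 2 + 1 / t * thetaNorm Θ z ^ 2 := by
  set A := 1 / a * ∑ i, (w i - z i) ^ 2
  have hbound : ∀ φ ∈ Θ, (thetaNorm Θ' w ^ 2 - A) * t ≤ ∑ i, z i ^ 2 / φ i := by
    intro φ hφ
    have hle : thetaNorm Θ' w ^ 2 ≤ A + 1 / t * ∑ i, z i ^ 2 / φ i := calc
      thetaNorm Θ' w ^ 2 ≤ ∑ i, w i ^ 2 / (a + t * φ i) := thetaNorm_sq_le hΘ' (hmap φ hφ) w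
      _ ≤ ∑ i, ((w i - z i) ^ 2 / a + z i ^ 2 / (t * φ i)) :=
        Finset.sum_le_sum fun i _ => sq_div_add_le _ _ ha (mul_pos ht (hΘ φ hφ i))
      _ = A + 1 / t * ∑ i, z i ^ 2 / φ i := sum_sq_sub_div_add_sum_sq_div a t w z φ
    rwa [one_div_mul_eq_div, ← sub_le_iff_le_add', le_div_iff₀ ht] at hle
  rw [one_div_mul_eq_div, ← sub_le_iff_le_add', le_div_iff₀ ht]
  exact le_thetaNorm_sq (fun φ hφ i => (hΘ φ hφ i).le) hne hbound

theorem exists_moreau_le (ha : 0 < a) (ht : 0 < t) (hΘ : ∀ θ ∈ Θ, ∀ i, 0 ≤ θ i)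
    {φ ψ : Fin d → ℝ} (hφ : 0 ≤ φ) (hψ : 0 ≤ ψ) (hseg : openSegment ℝ φ ψ ⊆ Θ)
    (w : Fin d → ℝ) :
    ∃ z : Fin d → ℝ, 1 / a * ∑ i, (w i - z i) ^ 2 + 1 / t * thetaNorm Θ z ^ 2 ≤
      ∑ i, w i ^ 2 / (a + t * φ i) := by
  set z : Fin d → ℝ := fun i => w i * (t * φ i) / (a + t * φ i)
  have hz : ∀ i, φ i = 0 → z i = 0 := fun i hi => by simp [z, hi]
  refine ⟨z, ?_⟩
  calc 1 / a * ∑ i, (w i - z i) ^ 2 + 1 / t * thetaNorm Θ z ^ 2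
      ≤ 1 / a * ∑ i, (w i - z i) ^ 2 + 1 / t * ∑ i, z i ^ 2 / φ i := by
        gcongr
        exact thetaNorm_sq_le_of_openSegment_subset hΘ hφ hψ hz hseg
    _ = ∑ i, ((w i - z i) ^ 2 / a + z i ^ 2 / (t * φ i)) :=
        (sum_sq_sub_div_add_sum_sq_div a t w z φ).symm
    _ = ∑ i, w i ^ 2 / (a + t * φ i) :=
        Finset.sum_congr rfl fun i _ => sq_div_add_eq (w i) ha (mul_nonneg ht.le (hφ i))

end moreau

def ksupportSet (d : ℕ) (k : ℝ) : Set (Fin d → ℝ) :=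
  {θ | (∀ i, 0 < θ i ∧ θ i ≤ 1) ∧ ∑ i, θ i ≤ k}

def boxSet (d : ℕ) (a b c : ℝ) : Set (Fin d → ℝ) :=
  {θ | (∀ i, a ≤ θ i ∧ θ i ≤ b) ∧ ∑ i, θ i ≤ c}

theorem isCompact_boxSet (d : ℕ) (a b c : ℝ) : IsCompact (boxSet d a b c) := by
  have hsum : IsClosed {θ : Fin d → ℝ | ∑ i, θ i ≤ c} :=
    isClosed_le (continuous_finsetSum _ fun i _ => continuous_apply i) continuous_const
  convert (isCompact_univ_pi fun _ : Fin d => isCompact_Icc (a := a) (b := b)).inter_right hsum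
  ext θ
  simp [boxSet, Pi.le_def, forall_and]

theorem openSegment_subset_ksupportSet {d : ℕ} {k : ℝ} (hk : 0 < k) (hkd : k ≤ d)
    {φ : Fin d → ℝ} (hφ₀ : 0 ≤ φ) (hφ₁ : φ ≤ 1) (hφk : ∑ i, φ i ≤ k) :
    openSegment ℝ φ (fun _ => k / d) ⊆ ksupportSet d k := by
  have hd : (0 : ℝ) < d := hk.trans_le hkd
  rintro _ ⟨μ, ν, hμ, hν, hμν, rfl⟩
  refine ⟨fun i => ⟨?_, ?_⟩, ?_⟩
  · have h₀ : 0 ≤ φ i := hφ₀ i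
    have : 0 < ν * (k / d) := by positivity
    simp only [Pi.add_apply, Pi.smul_apply, smul_eq_mul]
    nlinarith
  · have h₁ : φ i ≤ 1 := hφ₁ i
    have := mul_le_mul_of_nonneg_left ((div_le_one hd).2 hkd) hν.le
    simp only [Pi.add_apply, Pi.smul_apply, smul_eq_mul]
    nlinarith
  · simp only [Pi.add_apply, Pi.smul_apply, smul_eq_mul, Finset.sum_add_distrib, ← Finset.mul_sum,
      Finset.sum_const, Finset.card_univ, Fintype.card_fin, nsmul_eq_mul, mul_div_cancel₀ _ hd.ne']
    nlinarith [mul_le_mul_of_nonneg_left hφk hμ.le]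

section box

variable {d : ℕ} {a b k : ℝ}

theorem mem_boxSet_of_mem_ksupportSet (hab : a ≤ b) {φ : Fin d → ℝ} (hφ : φ ∈ ksupportSet d k) :
    (fun i => a + (b - a) * φ i) ∈ boxSet d a b (k * (b - a) + d * a) := by
  obtain ⟨hφ₁, hφk⟩ := hφ
  have ht : 0 ≤ b - a := sub_nonneg.2 hab
  refine ⟨fun i => ⟨?_, ?_⟩, ?_⟩
  · nlinarith [(hφ₁ i).1]
  · nlinarith [(hφ₁ i).2]
  · simp only [Finset.sum_add_distrib, ← Finset.mul_sum, Finset.sum_const, Finset.card_univ,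
      Fintype.card_fin, nsmul_eq_mul]
    nlinarith

theorem exists_openSegment_subset_ksupportSet_of_mem_boxSet (hk : 0 < k) (hkd : k ≤ d)
    (hab : a < b) {θ : Fin d → ℝ} (hθ : θ ∈ boxSet d a b (k * (b - a) + d * a)) :
    ∃ φ : Fin d → ℝ, 0 ≤ φ ∧ openSegment ℝ φ (fun _ => k / d) ⊆ ksupportSet d k ∧
      θ = fun i => a + (b - a) * φ i := by
  obtain ⟨hθ₁, hθc⟩ := hθ
  have ht : 0 < b - a := sub_pos.2 hab
  have hφ₀ : 0 ≤ fun i => (θ i - a) / (b - a) := fun i => div_nonneg (by linarith [hθ₁ i]) ht.le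
  refine ⟨_, hφ₀, openSegment_subset_ksupportSet hk hkd hφ₀
    (fun i => (div_le_one ht).2 (by linarith [hθ₁ i])) ?_, ?_⟩
  · rw [← Finset.sum_div, div_le_iff₀ ht, Finset.sum_sub_distrib]
    simp only [Finset.sum_const, Finset.card_univ, Fintype.card_fin, nsmul_eq_mul]
    linarith
  · ext i
    simp [mul_div_cancel₀ _ ht.ne']

end box

theorem box_norm_moreau_of_ksup {d k : ℕ} (hk1 : 1 ≤ k) (hkd : k ≤ d)
    (a b : ℝ) (ha : 0 < a) (hab : a < b) (w : Fin d → ℝ) :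
    IsLeast {x : ℝ | ∃ z : Fin d → ℝ,
        x = (1 / a) * ∑ i, (w i - z i) ^ 2 +
          (1 / (b - a)) *
            (thetaNorm {θ : Fin d → ℝ | (∀ i, 0 < θ i ∧ θ i ≤ 1) ∧ ∑ i, θ i ≤ (k : ℝ)} z) ^ 2}
      ((thetaNorm {θ : Fin d → ℝ | (∀ i, a ≤ θ i ∧ θ i ≤ b) ∧
          ∑ i, θ i ≤ (k : ℝ) * (b - a) + d * a} w) ^ 2) := by
  have hk : (0 : ℝ) < k := by exact_mod_cast hk1
  have hkd' : (k : ℝ) ≤ d := by exact_mod_cast hkd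
  have ht : 0 < b - a := sub_pos.2 hab
  have hks : ∀ φ ∈ ksupportSet d k, ∀ i, 0 < φ i := fun φ hφ i => (hφ.1 i).1
  have hbox : ∀ θ ∈ boxSet d a b (k * (b - a) + d * a), ∀ i, 0 < θ i :=
    fun θ hθ i => ha.trans_le (hθ.1 i).1
  have hφ₀ := openSegment_subset_ksupportSet hk hkd' le_rfl zero_le_one (by simp [hk.le])
    ⟨1 / 2, 1 / 2, by norm_num, by norm_num, by norm_num, rfl⟩
  have lower := thetaNorm_sq_le_moreau ha ht hks ⟨_, hφ₀⟩ (fun θ hθ i => (hbox θ hθ i).le)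
    (fun φ hφ => mem_boxSet_of_mem_ksupportSet hab.le hφ) w
  obtain ⟨θ, hθ, hθmin⟩ := exists_thetaNorm_sq_eq (isCompact_boxSet d a b _)
    ⟨_, mem_boxSet_of_mem_ksupportSet hab.le hφ₀⟩ hbox w
  obtain ⟨φ, hφ, hseg, rfl⟩ := exists_openSegment_subset_ksupportSet_of_mem_boxSet hk hkd' hab hθ
  obtain ⟨z, hz⟩ := exists_moreau_le ha ht (fun φ hφ i => (hks φ hφ i).le) hφ
    (fun _ => by positivity) hseg w
  refine ⟨⟨z, (lower z).antisymm (hθmin ▸ hz)⟩, ?_⟩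
  rintro _ ⟨z, rfl⟩
  exact lower z
end

section
/- Let γ¹,…,γᵐ ∈ R₊^d with Σ_ℓ γℓ strictly positive, and Θ = {θ ∈ (0,∞)^d : θ = Σ_ℓ λ_ℓ γℓ, λ in the unit simplex}. Then for every w ∈ R^d, ‖w‖_Θ = inf{ Σ_ℓ ‖v_ℓ‖_{γℓ} : supp(v_ℓ) ⊆ supp(γℓ), Σ_ℓ v_ℓ = w }, where ‖v‖_γ = sqrt(Σ_{i: γ_i>0} v_i²/γ_i). -/
noncomputable def gammaSemi {d : ℕ} (γ v : Fin d → ℝ) : ℝ :=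
  Real.sqrt (∑ i, if 0 < γ i then v i ^ 2 / γ i else 0)

/-!
Given `θ = ∑ λ_ℓ γ_ℓ ∈ Θ`, the split `v_ℓ = λ_ℓ γ_ℓ w / θ` satisfies
`∑ ‖v_ℓ‖_{γ_ℓ} ≤ (∑ w_i² / θ_i)^{1/2}` by Jensen's inequality for `√`. Conversely, for any
admissible split `v`, Sedrakyan's inequality in each coordinate gives
`∑ w_i² / θ_i ≤ ∑ ‖v_ℓ‖²_{γ_ℓ} / λ_ℓ`, and the weights `λ_ℓ ∝ ‖v_ℓ‖_{γ_ℓ} + δ` bound the right side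
by `S (S + m δ)` with `S = ∑ ‖v_ℓ‖_{γ_ℓ}`; let `δ → 0`. For `m = 0` the hypothesis forces `d = 0`,
so `Θ` is empty and both sides are `0`.
-/

open Finset Filter Topology

theorem Finset.sq_sum_div_le_sum_sq_div_of_nonneg {ι R : Type*} [Semifield R] [LinearOrder R]
    [IsStrictOrderedRing R] [ExistsAddOfLE R] (s : Finset ι) {f g : ι → R}
    (hg : ∀ i ∈ s, 0 ≤ g i) (hfg : ∀ i ∈ s, g i = 0 → f i = 0) :
    (∑ i ∈ s, f i) ^ 2 / ∑ i ∈ s, g i ≤ ∑ i ∈ s, f i ^ 2 / g i := by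
  have H : ∀ i ∈ s, 0 ≤ f i ^ 2 / g i := fun i hi ↦ div_nonneg (sq_nonneg _) (hg i hi)
  refine div_le_of_le_mul₀ (sum_nonneg hg) (sum_nonneg H)
    (sum_sq_le_sum_mul_sum_of_sq_le_mul _ H hg fun i hi ↦ ?_)
  rcases (hg i hi).eq_or_lt' with h | h
  · simp [h, hfg i hi h]
  · rw [div_mul_cancel₀ _ h.ne']

section

variable {d m : ℕ}

/-- The case split in `gammaSemi` is absorbed by the convention `x / 0 = 0`. -/
theorem gammaSemi_eq_sqrt_sum_div {γ : Fin d → ℝ} (hγ : ∀ i, 0 ≤ γ i) (v : Fin d → ℝ) :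
    gammaSemi γ v = √(∑ i, v i ^ 2 / γ i) := by
  refine congrArg Real.sqrt (sum_congr rfl fun i _ ↦ ?_)
  rcases (hγ i).eq_or_lt' with h | h <;> simp [h]

theorem gammaSemi_smul_mul {γ : Fin d → ℝ} (hγ : ∀ i, 0 ≤ γ i) {c : ℝ} (hc : 0 ≤ c)
    (u : Fin d → ℝ) : gammaSemi γ (c • (γ * u)) = c * √(∑ i, γ i * u i ^ 2) := by
  have hterm : ∀ i, (c • (γ * u)) i ^ 2 / γ i = c ^ 2 * (γ i * u i ^ 2) := by
    intro i
    rcases (hγ i).eq_or_lt' with h | h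
    · simp [h]
    · simp only [Pi.smul_apply, Pi.mul_apply, smul_eq_mul]
      field_simp
  rw [gammaSemi_eq_sqrt_sum_div hγ, sum_congr rfl fun i _ ↦ hterm i, ← mul_sum,
    Real.sqrt_mul (sq_nonneg c), Real.sqrt_sq hc]

def positiveMixtures (γ : Fin m → Fin d → ℝ) : Set (Fin d → ℝ) :=
  {θ | (∀ i, 0 < θ i) ∧
    ∃ lam : Fin m → ℝ, (∀ ℓ, 0 ≤ lam ℓ) ∧ ∑ ℓ, lam ℓ = 1 ∧ θ = ∑ ℓ, lam ℓ • γ ℓ}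

def decompositionCosts (γ : Fin m → Fin d → ℝ) (w : Fin d → ℝ) : Set ℝ :=
  {x | ∃ v : Fin m → Fin d → ℝ,
    (∀ ℓ i, γ ℓ i = 0 → v ℓ i = 0) ∧ ∑ ℓ, v ℓ = w ∧ x = ∑ ℓ, gammaSemi (γ ℓ) (v ℓ)}

theorem sum_smul_apply_pos {γ : Fin m → Fin d → ℝ} (hγ : ∀ ℓ i, 0 ≤ γ ℓ i)
    (hpos : ∀ i, 0 < ∑ ℓ, γ ℓ i) {lam : Fin m → ℝ} (hlam : ∀ ℓ, 0 < lam ℓ) (i : Fin d) :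
    0 < (∑ ℓ, lam ℓ • γ ℓ) i := by
  obtain ⟨ℓ, -, hℓ⟩ := exists_lt_of_sum_lt (f := fun _ ↦ (0 : ℝ)) (by simpa using hpos i)
  rw [Finset.sum_apply]
  exact sum_pos' (fun ℓ _ ↦ mul_nonneg (hlam ℓ).le (hγ ℓ i)) ⟨ℓ, mem_univ _, mul_pos (hlam ℓ) hℓ⟩

theorem sum_smul_mem_positiveMixtures {γ : Fin m → Fin d → ℝ} (hγ : ∀ ℓ i, 0 ≤ γ ℓ i)
    (hpos : ∀ i, 0 < ∑ ℓ, γ ℓ i) {lam : Fin m → ℝ} (hlam : ∀ ℓ, 0 < lam ℓ)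
    (hlam1 : ∑ ℓ, lam ℓ = 1) : ∑ ℓ, lam ℓ • γ ℓ ∈ positiveMixtures γ :=
  ⟨sum_smul_apply_pos hγ hpos hlam, lam, fun ℓ ↦ (hlam ℓ).le, hlam1, rfl⟩

theorem positiveMixtures_nonempty (hm : 0 < m) {γ : Fin m → Fin d → ℝ}
    (hγ : ∀ ℓ i, 0 ≤ γ ℓ i) (hpos : ∀ i, 0 < ∑ ℓ, γ ℓ i) : (positiveMixtures γ).Nonempty :=
  ⟨_, sum_smul_mem_positiveMixtures hγ hpos (lam := fun _ ↦ (m : ℝ)⁻¹)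
    (fun _ ↦ by positivity) (by simp [hm.ne'])⟩

theorem exists_decomposition_sum_gammaSemi_le {γ : Fin m → Fin d → ℝ}
    (hγ : ∀ ℓ i, 0 ≤ γ ℓ i) (w : Fin d → ℝ) {θ : Fin d → ℝ} (hθ : θ ∈ positiveMixtures γ) :
    ∃ v : Fin m → Fin d → ℝ, (∀ ℓ i, γ ℓ i = 0 → v ℓ i = 0) ∧ ∑ ℓ, v ℓ = w ∧
      ∑ ℓ, gammaSemi (γ ℓ) (v ℓ) ≤ √(∑ i, w i ^ 2 / θ i) := by
  obtain ⟨hθpos, lam, hlam, hlam1, rfl⟩ := hθ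
  set θ := ∑ ℓ, lam ℓ • γ ℓ
  set u : Fin d → ℝ := fun i ↦ w i / θ i
  refine ⟨fun ℓ ↦ lam ℓ • (γ ℓ * u), fun ℓ i h ↦ by simp [h], ?_, ?_⟩
  · simp_rw [← smul_mul_assoc, ← sum_mul]
    funext i
    exact mul_div_cancel₀ _ (hθpos i).ne'
  · have hcomb : ∑ ℓ, lam ℓ * ∑ i, γ ℓ i * u i ^ 2 = ∑ i, w i ^ 2 / θ i := by
      simp_rw [mul_sum, ← mul_assoc]
      rw [sum_comm]
      refine sum_congr rfl fun i _ ↦ ?_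
      have hθi : θ i = ∑ ℓ, lam ℓ * γ ℓ i := by simp [θ, Finset.sum_apply]
      rw [← sum_mul, ← hθi]
      simp only [u]
      field_simp [(hθpos i).ne']
    calc ∑ ℓ, gammaSemi (γ ℓ) (lam ℓ • (γ ℓ * u))
        = ∑ ℓ, lam ℓ • √(∑ i, γ ℓ i * u i ^ 2) :=
          sum_congr rfl fun ℓ _ ↦ gammaSemi_smul_mul (hγ ℓ) (hlam ℓ) u
      _ ≤ √(∑ ℓ, lam ℓ • ∑ i, γ ℓ i * u i ^ 2) :=
          Real.strictConcaveOn_sqrt.concaveOn.le_map_sum (fun ℓ _ ↦ hlam ℓ) hlam1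
            fun ℓ _ ↦ Set.mem_Ici.2 (sum_nonneg fun i _ ↦ mul_nonneg (hγ ℓ i) (sq_nonneg _))
      _ = √(∑ i, w i ^ 2 / θ i) := by simp only [smul_eq_mul, hcomb]

theorem sum_sq_div_sum_smul_le_sum_gammaSemi_sq_div {γ : Fin m → Fin d → ℝ}
    (hγ : ∀ ℓ i, 0 ≤ γ ℓ i) {lam : Fin m → ℝ} (hlam : ∀ ℓ, 0 < lam ℓ)
    {v : Fin m → Fin d → ℝ} (hsupp : ∀ ℓ i, γ ℓ i = 0 → v ℓ i = 0) :
    ∑ i, (∑ ℓ, v ℓ) i ^ 2 / (∑ ℓ, lam ℓ • γ ℓ) i ≤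
      ∑ ℓ, gammaSemi (γ ℓ) (v ℓ) ^ 2 / lam ℓ := by
  have hcoord : ∀ i, (∑ ℓ, v ℓ) i ^ 2 / (∑ ℓ, lam ℓ • γ ℓ) i ≤
      ∑ ℓ, v ℓ i ^ 2 / γ ℓ i / lam ℓ := by
    intro i
    simp only [Finset.sum_apply, Pi.smul_apply, smul_eq_mul, div_div, mul_comm (γ _ i)]
    exact sq_sum_div_le_sum_sq_div_of_nonneg _
      (fun ℓ _ ↦ mul_nonneg (hlam ℓ).le (hγ ℓ i))
      fun ℓ _ h ↦ hsupp ℓ i ((mul_eq_zero.1 h).resolve_left (hlam ℓ).ne')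
  refine (sum_le_sum fun i _ ↦ hcoord i).trans_eq ?_
  rw [sum_comm]
  refine sum_congr rfl fun ℓ _ ↦ ?_
  rw [← sum_div, gammaSemi_eq_sqrt_sum_div (hγ ℓ),
    Real.sq_sqrt (sum_nonneg fun i _ ↦ div_nonneg (sq_nonneg _) (hγ ℓ i))]

theorem exists_mem_positiveMixtures_sum_sq_div_le (hm : 0 < m) {γ : Fin m → Fin d → ℝ}
    (hγ : ∀ ℓ i, 0 ≤ γ ℓ i) (hpos : ∀ i, 0 < ∑ ℓ, γ ℓ i) {v : Fin m → Fin d → ℝ}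
    (hsupp : ∀ ℓ i, γ ℓ i = 0 → v ℓ i = 0) {δ : ℝ} (hδ : 0 < δ) :
    ∃ θ ∈ positiveMixtures γ, ∑ i, (∑ ℓ, v ℓ) i ^ 2 / θ i ≤
      (∑ ℓ, gammaSemi (γ ℓ) (v ℓ)) * (∑ ℓ, gammaSemi (γ ℓ) (v ℓ) + m * δ) := by
  set a : Fin m → ℝ := fun ℓ ↦ gammaSemi (γ ℓ) (v ℓ)
  have ha : ∀ ℓ, 0 ≤ a ℓ := fun ℓ ↦ Real.sqrt_nonneg _
  set c := ∑ ℓ, a ℓ + m * δ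
  have hc : 0 < c :=
    add_pos_of_nonneg_of_pos (sum_nonneg fun ℓ _ ↦ ha ℓ) (mul_pos (Nat.cast_pos.2 hm) hδ)
  set lam : Fin m → ℝ := fun ℓ ↦ (a ℓ + δ) / c
  have hlam : ∀ ℓ, 0 < lam ℓ := fun ℓ ↦ div_pos (by linarith [ha ℓ]) hc
  have hlam1 : ∑ ℓ, lam ℓ = 1 := by
    simp only [lam, ← sum_div, sum_add_distrib, sum_const, card_univ, Fintype.card_fin,
      nsmul_eq_mul]
    exact div_self hc.ne'
  refine ⟨_, sum_smul_mem_positiveMixtures hγ hpos hlam hlam1, ?_⟩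
  calc ∑ i, (∑ ℓ, v ℓ) i ^ 2 / (∑ ℓ, lam ℓ • γ ℓ) i
      ≤ ∑ ℓ, a ℓ ^ 2 / lam ℓ := sum_sq_div_sum_smul_le_sum_gammaSemi_sq_div hγ hlam hsupp
    _ ≤ ∑ ℓ, c * a ℓ := sum_le_sum fun ℓ _ ↦ by
        rw [div_div_eq_mul_div, div_le_iff₀ (by linarith [ha ℓ])]
        nlinarith [mul_nonneg (mul_nonneg hc.le (ha ℓ)) hδ.le]
    _ = (∑ ℓ, a ℓ) * c := by rw [← mul_sum, mul_comm]

theorem sInf_decompositionCosts_le_thetaNorm {γ : Fin m → Fin d → ℝ}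
    (hγ : ∀ ℓ i, 0 ≤ γ ℓ i) (hne : (positiveMixtures γ).Nonempty) (w : Fin d → ℝ) :
    sInf (decompositionCosts γ w) ≤ thetaNorm (positiveMixtures γ) w := by
  have hS : ∀ x ∈ decompositionCosts γ w, 0 ≤ x := by
    rintro _ ⟨v, -, -, rfl⟩
    exact sum_nonneg fun ℓ _ ↦ Real.sqrt_nonneg _
  have hle : ∀ θ ∈ positiveMixtures γ, sInf (decompositionCosts γ w) ≤ √(∑ i, w i ^ 2 / θ i) := by
    intro θ hθ
    obtain ⟨v, hsupp, hsum, hle⟩ := exists_decomposition_sum_gammaSemi_le hγ w hθ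
    exact (csInf_le ⟨0, hS⟩ ⟨v, hsupp, hsum, rfl⟩).trans hle
  have := hne.to_subtype
  rw [thetaNorm, Real.le_sqrt (Real.sInf_nonneg hS) (Real.iInf_nonneg fun θ ↦
    sum_nonneg fun i _ ↦ div_nonneg (sq_nonneg _) (θ.2.1 i).le)]
  exact le_ciInf fun θ ↦ (Real.le_sqrt (Real.sInf_nonneg hS)
    (sum_nonneg fun i _ ↦ div_nonneg (sq_nonneg _) (θ.2.1 i).le)).1 (hle θ θ.2)

theorem thetaNorm_le_sInf_decompositionCosts (hm : 0 < m) {γ : Fin m → Fin d → ℝ}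
    (hγ : ∀ ℓ i, 0 ≤ γ ℓ i) (hpos : ∀ i, 0 < ∑ ℓ, γ ℓ i) (w : Fin d → ℝ) :
    thetaNorm (positiveMixtures γ) w ≤ sInf (decompositionCosts γ w) := by
  obtain ⟨v₀, hsupp₀, hsum₀, -⟩ := exists_decomposition_sum_gammaSemi_le hγ w
    (positiveMixtures_nonempty hm hγ hpos).some_mem
  refine le_csInf ⟨_, v₀, hsupp₀, hsum₀, rfl⟩ ?_
  rintro _ ⟨v, hsupp, rfl, rfl⟩
  set x := ∑ ℓ, gammaSemi (γ ℓ) (v ℓ)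
  have hbdd : BddBelow (Set.range fun θ : positiveMixtures γ ↦ ∑ i, (∑ ℓ, v ℓ) i ^ 2 / θ.1 i) :=
    ⟨0, by
      rintro _ ⟨θ, rfl⟩
      exact sum_nonneg fun i _ ↦ div_nonneg (sq_nonneg _) (θ.2.1 i).le⟩
  have hlim : Tendsto (fun δ : ℝ ↦ x * (x + m * δ)) (𝓝[>] 0) (𝓝 (x ^ 2)) :=
    (Continuous.tendsto' (by fun_prop) 0 _ (by simp [sq])).mono_left nhdsWithin_le_nhds
  have hx : 0 ≤ x := sum_nonneg fun ℓ _ ↦ Real.sqrt_nonneg _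
  rw [thetaNorm, Real.sqrt_le_left hx]
  refine ge_of_tendsto hlim (eventually_nhdsWithin_of_forall fun δ hδ ↦ ?_)
  obtain ⟨θ, hθ, hle⟩ := exists_mem_positiveMixtures_sum_sq_div_le hm hγ hpos hsupp hδ
  exact ciInf_le_of_le hbdd ⟨θ, hθ⟩ hle

theorem positiveMixtures_eq_empty (γ : Fin 0 → Fin d → ℝ) : positiveMixtures γ = ∅ := by
  ext θ
  simp [positiveMixtures]

theorem decompositionCosts_eq_singleton_zero (γ : Fin m → Fin 0 → ℝ) (w : Fin 0 → ℝ) :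
    decompositionCosts γ w = {0} := by
  ext x
  simp [decompositionCosts, gammaSemi, Subsingleton.elim _ w]

end

theorem theta_norm_inf_convolution {d m : ℕ} (γ : Fin m → Fin d → ℝ)
    (hγ : ∀ ℓ i, 0 ≤ γ ℓ i) (hpos : ∀ i, 0 < ∑ ℓ, γ ℓ i) (w : Fin d → ℝ) :
    thetaNorm {θ : Fin d → ℝ | (∀ i, 0 < θ i) ∧
        ∃ lam : Fin m → ℝ, (∀ ℓ, 0 ≤ lam ℓ) ∧ ∑ ℓ, lam ℓ = 1 ∧
          θ = ∑ ℓ, lam ℓ • γ ℓ} w =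
      sInf {x : ℝ | ∃ v : Fin m → Fin d → ℝ,
        (∀ ℓ i, γ ℓ i = 0 → v ℓ i = 0) ∧ ∑ ℓ, v ℓ = w ∧
        x = ∑ ℓ, gammaSemi (γ ℓ) (v ℓ)} := by
  change thetaNorm (positiveMixtures γ) w = sInf (decompositionCosts γ w)
  rcases m.eq_zero_or_pos with rfl | hm
  · obtain rfl : d = 0 := by
      by_contra hd
      simpa using hpos ⟨0, Nat.pos_of_ne_zero hd⟩
    rw [positiveMixtures_eq_empty, decompositionCosts_eq_singleton_zero, csInf_singleton,
      thetaNorm, Real.iInf_of_isEmpty, Real.sqrt_zero]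
  exact (thetaNorm_le_sInf_decompositionCosts hm hγ hpos w).antisymm
    (sInf_decompositionCosts_le_thetaNorm hγ (positiveMixtures_nonempty hm hγ hpos) w)
end

section
/- If Θ is a convex bounded subset of the strictly positive orthant in R^d invariant under permutations of coordinates, then ‖w‖_Θ = sqrt(inf_{θ∈Θ} Σ_i w_i²/θ_i) is a symmetric gauge function: a norm invariant under coordinate permutations and sign changes. -/
open Finset

section WeightedSq

variable {ι : Type*} [Fintype ι]

noncomputable def weightedSq (θ w : ι → ℝ) : ℝ := ∑ i, w i ^ 2 / θ i

lemma weightedSq_nonneg {θ : ι → ℝ} (hθ : ∀ i, 0 ≤ θ i) (w : ι → ℝ) : 0 ≤ weightedSq θ w :=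
  sum_nonneg fun i _ => div_nonneg (sq_nonneg _) (hθ i)

lemma sq_div_le_weightedSq {θ : ι → ℝ} (hθ : ∀ i, 0 ≤ θ i) (w : ι → ℝ) (i : ι) :
    w i ^ 2 / θ i ≤ weightedSq θ w :=
  single_le_sum (fun j _ => div_nonneg (sq_nonneg (w j)) (hθ j)) (mem_univ i)

lemma weightedSq_pos {θ w : ι → ℝ} (hθ : ∀ i, 0 < θ i) (hw : w ≠ 0) : 0 < weightedSq θ w := by
  obtain ⟨i, hi⟩ := Function.ne_iff.mp hw
  exact (div_pos (pow_two_pos_of_ne_zero hi) (hθ i)).trans_le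
    (sq_div_le_weightedSq (fun j => (hθ j).le) w i)

lemma weightedSq_smul (θ : ι → ℝ) (a : ℝ) (w : ι → ℝ) :
    weightedSq θ (a • w) = a ^ 2 * weightedSq θ w := by
  simp only [weightedSq, mul_sum, Pi.smul_apply, smul_eq_mul, mul_pow, mul_div_assoc]

lemma weightedSq_smul_left (t : ℝ) (θ w : ι → ℝ) :
    weightedSq (t • θ) w = weightedSq θ w / t := by
  simp only [weightedSq, sum_div, Pi.smul_apply, smul_eq_mul, div_div, mul_comm]

lemma weightedSq_comp_perm (σ : Equiv.Perm ι) (θ w : ι → ℝ) :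
    weightedSq (θ ∘ σ) (w ∘ σ) = weightedSq θ w :=
  Equiv.sum_comp σ fun i => w i ^ 2 / θ i

lemma weightedSq_sign {ε : ι → ℝ} (hε : ∀ i, ε i = 1 ∨ ε i = -1) (θ w : ι → ℝ) :
    weightedSq θ (fun i => ε i * w i) = weightedSq θ w := by
  refine sum_congr rfl fun i _ => ?_
  rcases hε i with h | h <;> simp [h]

lemma weightedSq_add_le {θ₁ θ₂ : ι → ℝ} (hθ₁ : ∀ i, 0 < θ₁ i) (hθ₂ : ∀ i, 0 < θ₂ i)
    (v w : ι → ℝ) : weightedSq (θ₁ + θ₂) (v + w) ≤ weightedSq θ₁ v + weightedSq θ₂ w := by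
  rw [weightedSq, weightedSq, weightedSq, ← sum_add_distrib]
  refine sum_le_sum fun i _ => ?_
  simpa [Fin.sum_univ_two] using
    sq_sum_div_le_sum_sq_div univ ![v i, w i] (g := ![θ₁ i, θ₂ i]) (by simp [hθ₁ i, hθ₂ i])

end WeightedSq

lemma exists_div_add_div_one_sub_eq_sq {A B : ℝ} (hA : 0 < A) (hB : 0 < B) :
    ∃ t ∈ Set.Ioo (0 : ℝ) 1, A / t + B / (1 - t) = (√A + √B) ^ 2 := by
  have hsA := Real.sqrt_pos.mpr hA
  have hsB := Real.sqrt_pos.mpr hB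
  have h1t : 1 - √A / (√A + √B) = √B / (√A + √B) := by field_simp; ring
  refine ⟨√A / (√A + √B), ⟨by positivity, ?_⟩, ?_⟩
  · rw [div_lt_one (by positivity)]; linarith
  · rw [h1t, div_div_eq_mul_div, div_div_eq_mul_div, mul_comm A, mul_comm B, mul_div_assoc,
      mul_div_assoc, Real.div_sqrt, Real.div_sqrt]
    ring

section ThetaSq

variable {ι : Type*} [Fintype ι] {Θ : Set (ι → ℝ)}

noncomputable def thetaSq (Θ : Set (ι → ℝ)) (w : ι → ℝ) : ℝ := ⨅ θ : Θ, weightedSq (θ : ι → ℝ) w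

lemma bddBelow_range_weightedSq (hpos : ∀ θ ∈ Θ, ∀ i, 0 ≤ θ i) (w : ι → ℝ) :
    BddBelow (Set.range fun θ : Θ => weightedSq (θ : ι → ℝ) w) :=
  ⟨0, by rintro _ ⟨θ, rfl⟩; exact weightedSq_nonneg (hpos θ θ.2) w⟩

lemma thetaSq_le (hpos : ∀ θ ∈ Θ, ∀ i, 0 ≤ θ i) {θ : ι → ℝ} (hθ : θ ∈ Θ) (w : ι → ℝ) :
    thetaSq Θ w ≤ weightedSq θ w :=
  ciInf_le (bddBelow_range_weightedSq hpos w) ⟨θ, hθ⟩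

lemma thetaSq_smul (Θ : Set (ι → ℝ)) (a : ℝ) (w : ι → ℝ) :
    thetaSq Θ (a • w) = a ^ 2 * thetaSq Θ w := by
  simp only [thetaSq, weightedSq_smul, Real.mul_iInf_of_nonneg (sq_nonneg a)]

lemma thetaSq_zero (Θ : Set (ι → ℝ)) : thetaSq Θ 0 = 0 := by
  simpa using thetaSq_smul Θ 0 0

lemma thetaSq_pos (hne : Θ.Nonempty) (hbdd : Bornology.IsBounded Θ)
    (hpos : ∀ θ ∈ Θ, ∀ i, 0 < θ i) {w : ι → ℝ} (hw : w ≠ 0) : 0 < thetaSq Θ w := by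
  obtain ⟨i, hi⟩ := Function.ne_iff.mp hw
  obtain ⟨M, hM⟩ := hbdd.exists_norm_le
  have hle : ∀ θ ∈ Θ, θ i ≤ M := fun θ hθ =>
    (le_abs_self _).trans ((norm_le_pi_norm θ i).trans (hM θ hθ))
  obtain ⟨θ₀, hθ₀⟩ := hne
  have : Nonempty Θ := ⟨⟨θ₀, hθ₀⟩⟩
  have hM_pos : 0 < M := (hpos θ₀ hθ₀ i).trans_le (hle θ₀ hθ₀)
  refine (div_pos (pow_two_pos_of_ne_zero hi) hM_pos).trans_le (le_ciInf fun θ => ?_)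
  calc w i ^ 2 / M ≤ w i ^ 2 / θ.1 i :=
        div_le_div_of_nonneg_left (sq_nonneg _) (hpos θ θ.2 i) (hle θ θ.2)
    _ ≤ weightedSq θ.1 w := sq_div_le_weightedSq (fun j => (hpos θ θ.2 j).le) w i

lemma thetaSq_comp_perm (hperm : ∀ σ : Equiv.Perm ι, ∀ θ ∈ Θ, θ ∘ σ ∈ Θ)
    (w : ι → ℝ) (σ : Equiv.Perm ι) : thetaSq Θ (w ∘ σ) = thetaSq Θ w := by
  let e : Θ ≃ Θ :=
    { toFun := fun θ => ⟨θ.1 ∘ σ, hperm σ θ.1 θ.2⟩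
      invFun := fun θ => ⟨θ.1 ∘ σ.symm, hperm σ.symm θ.1 θ.2⟩
      left_inv := fun θ => by ext; simp
      right_inv := fun θ => by ext; simp }
  exact (e.iInf_congr fun θ => weightedSq_comp_perm σ θ.1 w).symm

lemma thetaSq_sign (Θ : Set (ι → ℝ)) {ε : ι → ℝ} (hε : ∀ i, ε i = 1 ∨ ε i = -1)
    (w : ι → ℝ) : thetaSq Θ (fun i => ε i * w i) = thetaSq Θ w :=
  iInf_congr fun θ => weightedSq_sign hε θ.1 w

lemma sqrt_thetaSq_add_le_of_mem (hconv : Convex ℝ Θ) (hpos : ∀ θ ∈ Θ, ∀ i, 0 < θ i)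
    {θ₁ θ₂ : ι → ℝ} (hθ₁ : θ₁ ∈ Θ) (hθ₂ : θ₂ ∈ Θ) {v w : ι → ℝ} (hv : v ≠ 0) (hw : w ≠ 0) :
    √(thetaSq Θ (v + w)) ≤ √(weightedSq θ₁ v) + √(weightedSq θ₂ w) := by
  obtain ⟨t, ⟨ht₀, ht₁⟩, ht⟩ := exists_div_add_div_one_sub_eq_sq
    (weightedSq_pos (hpos θ₁ hθ₁) hv) (weightedSq_pos (hpos θ₂ hθ₂) hw)
  have hmem : t • θ₁ + (1 - t) • θ₂ ∈ Θ := hconv hθ₁ hθ₂ ht₀.le (by linarith) (by ring)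
  rw [Real.sqrt_le_left (by positivity), ← ht, ← weightedSq_smul_left, ← weightedSq_smul_left]
  calc thetaSq Θ (v + w) ≤ weightedSq (t • θ₁ + (1 - t) • θ₂) (v + w) :=
        thetaSq_le (fun θ hθ i => (hpos θ hθ i).le) hmem _
    _ ≤ _ := weightedSq_add_le (fun i => mul_pos ht₀ (hpos θ₁ hθ₁ i))
        (fun i => mul_pos (sub_pos.mpr ht₁) (hpos θ₂ hθ₂ i)) v w

lemma sqrt_thetaSq_eq_iInf [Nonempty Θ] (hpos : ∀ θ ∈ Θ, ∀ i, 0 ≤ θ i) (w : ι → ℝ) :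
    √(thetaSq Θ w) = ⨅ θ : Θ, √(weightedSq (θ : ι → ℝ) w) :=
  Monotone.map_ciInf_of_continuousAt Real.continuous_sqrt.continuousAt
    (fun _ _ => Real.sqrt_le_sqrt) (bddBelow_range_weightedSq hpos w)

lemma sqrt_thetaSq_smul (Θ : Set (ι → ℝ)) (a : ℝ) (w : ι → ℝ) :
    √(thetaSq Θ (a • w)) = |a| * √(thetaSq Θ w) := by
  rw [thetaSq_smul, Real.sqrt_mul (sq_nonneg a), Real.sqrt_sq_eq_abs]

lemma sqrt_thetaSq_eq_zero_iff (hne : Θ.Nonempty) (hbdd : Bornology.IsBounded Θ)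
    (hpos : ∀ θ ∈ Θ, ∀ i, 0 < θ i) {w : ι → ℝ} : √(thetaSq Θ w) = 0 ↔ w = 0 := by
  refine ⟨fun h => by_contra fun hw => (Real.sqrt_pos.mpr (thetaSq_pos hne hbdd hpos hw)).ne' h,
    fun hw => ?_⟩
  rw [hw, thetaSq_zero, Real.sqrt_zero]

lemma sqrt_thetaSq_add_le (hne : Θ.Nonempty) (hconv : Convex ℝ Θ)
    (hpos : ∀ θ ∈ Θ, ∀ i, 0 < θ i) (v w : ι → ℝ) :
    √(thetaSq Θ (v + w)) ≤ √(thetaSq Θ v) + √(thetaSq Θ w) := by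
  rcases eq_or_ne v 0 with rfl | hv
  · simp [thetaSq_zero]
  rcases eq_or_ne w 0 with rfl | hw
  · simp [thetaSq_zero]
  have : Nonempty Θ := hne.to_subtype
  have hnn : ∀ θ ∈ Θ, ∀ i, 0 ≤ θ i := fun θ hθ i => (hpos θ hθ i).le
  rw [sqrt_thetaSq_eq_iInf hnn v, sqrt_thetaSq_eq_iInf hnn w]
  exact le_ciInf_add_ciInf fun θ₁ θ₂ => sqrt_thetaSq_add_le_of_mem hconv hpos θ₁.2 θ₂.2 hv hw

end ThetaSq

lemma thetaNorm_eq_sqrt_thetaSq {d : ℕ} (Θ : Set (Fin d → ℝ)) (w : Fin d → ℝ) :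
    thetaNorm Θ w = √(thetaSq Θ w) :=
  rfl

theorem theta_norm_symmetric_gauge {d : ℕ} (Θ : Set (Fin d → ℝ)) (hne : Θ.Nonempty)
    (hconv : Convex ℝ Θ) (hbdd : Bornology.IsBounded Θ)
    (hpos : ∀ θ ∈ Θ, ∀ i, 0 < θ i)
    (hperm : ∀ σ : Equiv.Perm (Fin d), ∀ θ ∈ Θ, (θ ∘ σ) ∈ Θ) :
    (∀ w, thetaNorm Θ w = 0 ↔ w = 0) ∧
    (∀ (a : ℝ) (w : Fin d → ℝ), thetaNorm Θ (a • w) = |a| * thetaNorm Θ w) ∧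
    (∀ v w : Fin d → ℝ, thetaNorm Θ (v + w) ≤ thetaNorm Θ v + thetaNorm Θ w) ∧
    (∀ (w : Fin d → ℝ) (σ : Equiv.Perm (Fin d)), thetaNorm Θ (w ∘ σ) = thetaNorm Θ w) ∧
    (∀ (w ε : Fin d → ℝ), (∀ i, ε i = 1 ∨ ε i = -1) →
      thetaNorm Θ (fun i => ε i * w i) = thetaNorm Θ w) := by
  simp only [thetaNorm_eq_sqrt_thetaSq]
  exact ⟨fun _ => sqrt_thetaSq_eq_zero_iff hne hbdd hpos, sqrt_thetaSq_smul Θ,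
    sqrt_thetaSq_add_le hne hconv hpos,
    fun w σ => by rw [thetaSq_comp_perm hperm w σ],
    fun w _ hε => by rw [thetaSq_sign Θ hε w]⟩
end

section
/- Let r = min(d,T) and Θ a bounded convex permutation-invariant subset of (0,∞)^r. For W = [w_1,…,w_T] ∈ R^{d×T} and Π = I - 11ᵀ/T the centering projection, ‖WΠ‖_Θ = min_{z∈R^d} ‖[w_1 - z, …, w_T - z]‖_Θ, where ‖·‖_Θ denotes the orthogonally invariant norm W ↦ ‖σ(W)‖_Θ. -/
open Matrix

/-- `s` is the (nonincreasing, nonnegative) vector of singular values of `W`,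
witnessed by a singular value decomposition. -/
def IsSVD {d T : ℕ} (W : Matrix (Fin d) (Fin T) ℝ) (s : Fin (min d T) → ℝ) : Prop :=
  Antitone s ∧ (∀ i, 0 ≤ s i) ∧
    ∃ U : Matrix (Fin d) (Fin d) ℝ, U * Uᵀ = 1 ∧
      ∃ V : Matrix (Fin T) (Fin T) ℝ, V * Vᵀ = 1 ∧
        W = U * (Matrix.of fun (i : Fin d) (j : Fin T) =>
          if h : (i : ℕ) = (j : ℕ) ∧ (i : ℕ) < min d T then s ⟨(i : ℕ), h.2⟩ else 0) * Vᵀ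


lemma dot_self_eq {n : ℕ} (v : Fin n → ℝ) : v ⬝ᵥ v = ∑ j, v j ^ 2 := by
  simp [dotProduct, sq]

lemma mulVec_dot_self {n m : ℕ} (M : Matrix (Fin n) (Fin m) ℝ) (hM : Mᵀ * M = 1)
    (y : Fin m → ℝ) : (M *ᵥ y) ⬝ᵥ (M *ᵥ y) = y ⬝ᵥ y := by
  rw [Matrix.dotProduct_mulVec, ← Matrix.mulVec_transpose, Matrix.mulVec_mulVec, hM,
    Matrix.one_mulVec]

lemma sum_eq_sum_castLE {n m : ℕ} (h : m ≤ n) (g : Fin n → ℝ)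
    (hg : ∀ i : Fin n, m ≤ (i : ℕ) → g i = 0) :
    ∑ i, g i = ∑ i : Fin m, g (Fin.castLE h i) := by
  have hm : ∑ x ∈ Finset.univ.map (Fin.castLEEmb h), g x = ∑ i : Fin m, g (Fin.castLE h i) := by
    rw [Finset.sum_map]; rfl
  rw [← hm]
  refine (Finset.sum_subset (Finset.subset_univ _) ?_).symm
  intro i _ hi
  refine hg i (le_of_not_gt fun hlt => hi ?_)
  simp only [Finset.mem_map, Finset.mem_univ, true_and]
  exact ⟨⟨i, hlt⟩, rfl⟩

lemma sum_castLE_le {n m : ℕ} (h : m ≤ n) (g : Fin n → ℝ) (hg : ∀ i, 0 ≤ g i) :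
    ∑ i : Fin m, g (Fin.castLE h i) ≤ ∑ i, g i := by
  have hm : ∑ x ∈ Finset.univ.map (Fin.castLEEmb h), g x = ∑ i : Fin m, g (Fin.castLE h i) := by
    rw [Finset.sum_map]; rfl
  rw [← hm]
  exact Finset.sum_le_sum_of_subset_of_nonneg (Finset.subset_univ _) (fun i _ _ => hg i)

lemma svd_quadform {d T : ℕ} {A : Matrix (Fin d) (Fin T) ℝ} {s : Fin (min d T) → ℝ}
    {U : Matrix (Fin d) (Fin d) ℝ} {V : Matrix (Fin T) (Fin T) ℝ}
    (hV : V * Vᵀ = 1)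
    (hA : A = U * (Matrix.of fun (i : Fin d) (j : Fin T) =>
          if h : (i : ℕ) = (j : ℕ) ∧ (i : ℕ) < min d T then s ⟨(i : ℕ), h.2⟩ else 0) * Vᵀ)
    (x : Fin d → ℝ) :
    (Aᵀ *ᵥ x) ⬝ᵥ (Aᵀ *ᵥ x)
      = ∑ i : Fin (min d T), s i ^ 2 * ((Uᵀ *ᵥ x) (Fin.castLE (min_le_left d T) i)) ^ 2 := by
  set D : Matrix (Fin d) (Fin T) ℝ := (Matrix.of fun (i : Fin d) (j : Fin T) =>
          if h : (i : ℕ) = (j : ℕ) ∧ (i : ℕ) < min d T then s ⟨(i : ℕ), h.2⟩ else 0) with hD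
  set c : Fin d → ℝ := Uᵀ *ᵥ x with hc
  have h2 : Aᵀ *ᵥ x = V *ᵥ (Dᵀ *ᵥ c) := by
    rw [hA]
    simp only [Matrix.transpose_mul, Matrix.transpose_transpose, hc]
    rw [Matrix.mulVec_mulVec, Matrix.mulVec_mulVec, Matrix.mul_assoc]
  rw [h2, mulVec_dot_self V (mul_eq_one_comm.mp hV) _, dot_self_eq]
  have hDc : ∀ j : Fin T, (Dᵀ *ᵥ c) j
      = if h : (j : ℕ) < min d T then
          s ⟨(j : ℕ), h⟩ * c ⟨(j : ℕ), lt_of_lt_of_le h (min_le_left d T)⟩ else 0 := by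
    intro j
    have hexp : (Dᵀ *ᵥ c) j = ∑ i : Fin d, D i j * c i := by
      simp [Matrix.mulVec, dotProduct, Matrix.transpose_apply]
    rw [hexp]
    by_cases h : (j : ℕ) < min d T
    · rw [dif_pos h]
      have hjd : (j : ℕ) < d := lt_of_lt_of_le h (min_le_left d T)
      rw [Finset.sum_eq_single (⟨(j : ℕ), hjd⟩ : Fin d)]
      · simp [hD, h]
      · intro i _ hne
        have : ¬((i : ℕ) = (j : ℕ) ∧ (i : ℕ) < min d T) := by
          rintro ⟨h1, -⟩
          exact hne (Fin.ext h1)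
        simp only [hD, Matrix.of_apply]
        rw [dif_neg this, zero_mul]
      · intro h'; exact absurd (Finset.mem_univ _) h'
    · rw [dif_neg h]
      refine Finset.sum_eq_zero fun i _ => ?_
      have : ¬((i : ℕ) = (j : ℕ) ∧ (i : ℕ) < min d T) := by
        rintro ⟨h1, h2⟩; exact h (h1 ▸ h2)
      simp only [hD, Matrix.of_apply]
      rw [dif_neg this, zero_mul]
  rw [sum_eq_sum_castLE (min_le_right d T) (fun j => (Dᵀ *ᵥ c) j ^ 2)
      (fun j hj => by show (Dᵀ *ᵥ c) j ^ 2 = 0; rw [hDc j, dif_neg (not_lt.mpr hj)]; ring)]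
  refine Finset.sum_congr rfl fun i _ => ?_
  rw [hDc, dif_pos (by simpa using i.2)]
  rw [mul_pow]
  congr 1

lemma coord_span {d p : ℕ} {U : Matrix (Fin d) (Fin d) ℝ} (hU : U * Uᵀ = 1)
    (e : Fin p → Fin d) (a : Fin p → ℝ) (i : Fin d) :
    (Uᵀ *ᵥ (∑ j, a j • (fun m => U m (e j)))) i
      = ∑ j, a j * (if i = e j then 1 else 0) := by
  have hUt : Uᵀ * U = 1 := mul_eq_one_comm.mp hU
  have h1 : (Uᵀ *ᵥ (∑ j, a j • (fun m => U m (e j)))) i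
      = ∑ m, U m i * (∑ j, a j * U m (e j)) := by
    simp [Matrix.mulVec, dotProduct, Matrix.transpose_apply, Finset.sum_apply,
      Pi.smul_apply, smul_eq_mul]
  rw [h1]
  have h2 : ∀ m, U m i * (∑ j, a j * U m (e j)) = ∑ j, a j * (U m i * U m (e j)) := by
    intro m; rw [Finset.mul_sum]; exact Finset.sum_congr rfl fun j _ => by ring
  simp_rw [h2]
  rw [Finset.sum_comm]
  refine Finset.sum_congr rfl fun j _ => ?_
  rw [← Finset.mul_sum]
  congr 1
  have : ∑ m, U m i * U m (e j) = (Uᵀ * U) i (e j) := by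
    rw [Matrix.mul_apply]; rfl
  rw [this, hUt, Matrix.one_apply]

lemma li_cols {d p : ℕ} {U : Matrix (Fin d) (Fin d) ℝ} (hU : U * Uᵀ = 1)
    {e : Fin p → Fin d} (he : Function.Injective e) :
    LinearIndependent ℝ (fun j (m : Fin d) => U m (e j)) := by
  rw [Fintype.linearIndependent_iff]
  intro a ha j0
  have ha' : ∑ j, a j • (fun m => U m (e j)) = (0 : Fin d → ℝ) := by
    simpa using ha
  have h := coord_span hU e a (e j0)
  rw [ha'] at h
  simp only [Matrix.mulVec_zero, Pi.zero_apply] at h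
  rw [Finset.sum_eq_single j0] at h
  · simpa using h.symm
  · intro j _ hj
    rw [if_neg (fun hh => hj (he hh.symm)), mul_zero]
  · intro h'; exact absurd (Finset.mem_univ _) h'

lemma sv_le {d T : ℕ} {A B : Matrix (Fin d) (Fin T) ℝ} {s t : Fin (min d T) → ℝ}
    (hA : IsSVD A s) (hB : IsSVD B t)
    (hq : ∀ x : Fin d → ℝ, (Bᵀ *ᵥ x) ⬝ᵥ (Bᵀ *ᵥ x) ≤ (Aᵀ *ᵥ x) ⬝ᵥ (Aᵀ *ᵥ x))
    (k : Fin (min d T)) : t k ≤ s k := by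
  obtain ⟨hsA, hs0, UA, hUA, VA, hVA, hAeq⟩ := hA
  obtain ⟨htB, ht0, UB, hUB, VB, hVB, hBeq⟩ := hB
  have hkr : (k : ℕ) < min d T := k.2
  have hkd : (k : ℕ) < d := lt_of_lt_of_le hkr (min_le_left d T)
  set eB : Fin ((k : ℕ) + 1) → Fin d :=
    fun j => ⟨(j : ℕ), lt_of_le_of_lt (Nat.lt_succ_iff.mp j.2) hkd⟩ with heB
  set eA : Fin (d - (k : ℕ)) → Fin d :=
    fun j => ⟨(k : ℕ) + (j : ℕ), by have := j.2; omega⟩ with heA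
  have heBinj : Function.Injective eB := by
    intro j j' h
    exact Fin.ext (by simpa [heB] using congrArg Fin.val h)
  have heAinj : Function.Injective eA := by
    intro j j' h
    have := congrArg Fin.val h
    simp only [heA] at this
    exact Fin.ext (by omega)
  have liB := li_cols hUB heBinj
  have liA := li_cols hUA heAinj
  set SB := Submodule.span ℝ (Set.range (fun j (m : Fin d) => UB m (eB j))) with hSB
  set SA := Submodule.span ℝ (Set.range (fun j (m : Fin d) => UA m (eA j))) with hSA
  have hdimB : Module.finrank ℝ ↥SB = (k : ℕ) + 1 := by
    rw [hSB, finrank_span_eq_card liB, Fintype.card_fin]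
  have hdimA : Module.finrank ℝ ↥SA = d - (k : ℕ) := by
    rw [hSA, finrank_span_eq_card liA, Fintype.card_fin]
  have hinf : 0 < Module.finrank ℝ ↥(SB ⊓ SA) := by
    have h1 := Submodule.finrank_sup_add_finrank_inf_eq SB SA
    have h2 : Module.finrank ℝ ↥(SB ⊔ SA) ≤ d := by
      have := Submodule.finrank_le (SB ⊔ SA)
      rwa [Module.finrank_fintype_fun_eq_card, Fintype.card_fin] at this
    rw [hdimB, hdimA] at h1
    omega
  have : Nontrivial ↥(SB ⊓ SA) := Module.finrank_pos_iff.mp hinf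
  obtain ⟨x', hx'⟩ := exists_ne (0 : ↥(SB ⊓ SA))
  set x : Fin d → ℝ := (x' : Fin d → ℝ) with hx
  have hx0 : x ≠ 0 := fun h => hx' (Submodule.coe_eq_zero.mp h)
  have hxB : x ∈ SB := x'.2.1
  have hxA : x ∈ SA := x'.2.2
  obtain ⟨a, haeq⟩ := (Submodule.mem_span_range_iff_exists_fun ℝ).mp hxB
  obtain ⟨b, hbeq⟩ := (Submodule.mem_span_range_iff_exists_fun ℝ).mp hxA
  have haeq' : ∑ j, a j • (fun m => UB m (eB j)) = x := by
    rw [← haeq]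
  have hbeq' : ∑ j, b j • (fun m => UA m (eA j)) = x := by
    rw [← hbeq]
  set cB : Fin d → ℝ := UBᵀ *ᵥ x with hcB
  set cA : Fin d → ℝ := UAᵀ *ᵥ x with hcA
  have hcB0 : ∀ i : Fin d, (k : ℕ) < (i : ℕ) → cB i = 0 := by
    intro i hi
    have hkey : cB i = ∑ j, a j * (if i = eB j then 1 else 0) := by
      rw [hcB, ← haeq']; exact coord_span hUB eB a i
    rw [hkey]
    refine Finset.sum_eq_zero fun j _ => ?_
    rw [if_neg, mul_zero]
    intro hh
    have : (i : ℕ) = (j : ℕ) := congrArg Fin.val hh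
    have hj : (j : ℕ) ≤ (k : ℕ) := Nat.lt_succ_iff.mp j.2
    omega
  have hcA0 : ∀ i : Fin d, (i : ℕ) < (k : ℕ) → cA i = 0 := by
    intro i hi
    have hkey : cA i = ∑ j, b j * (if i = eA j then 1 else 0) := by
      rw [hcA, ← hbeq']; exact coord_span hUA eA b i
    rw [hkey]
    refine Finset.sum_eq_zero fun j _ => ?_
    rw [if_neg, mul_zero]
    intro hh
    have : (i : ℕ) = (k : ℕ) + (j : ℕ) := congrArg Fin.val hh
    omega
  have hnB : ∑ i, cB i ^ 2 = ∑ i, x i ^ 2 := by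
    have h := mulVec_dot_self UBᵀ (by rw [Matrix.transpose_transpose]; exact hUB) x
    rw [dot_self_eq, dot_self_eq] at h
    exact h
  have hnA : ∑ i, cA i ^ 2 = ∑ i, x i ^ 2 := by
    have h := mulVec_dot_self UAᵀ (by rw [Matrix.transpose_transpose]; exact hUA) x
    rw [dot_self_eq, dot_self_eq] at h
    exact h
  set n : ℝ := ∑ i, x i ^ 2 with hn
  have hnpos : 0 < n := by
    obtain ⟨i, hi⟩ := Function.ne_iff.mp hx0
    have hi' : x i ≠ 0 := hi
    exact Finset.sum_pos' (fun _ _ => sq_nonneg _)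
      ⟨i, Finset.mem_univ _, lt_of_le_of_ne (sq_nonneg _) (Ne.symm (pow_ne_zero 2 hi'))⟩
  have hL : t k ^ 2 * n ≤ (Bᵀ *ᵥ x) ⬝ᵥ (Bᵀ *ᵥ x) := by
    rw [svd_quadform hVB hBeq x]
    have hrestrict : ∑ i : Fin d, cB i ^ 2
        = ∑ i : Fin (min d T), cB (Fin.castLE (min_le_left d T) i) ^ 2 :=
      sum_eq_sum_castLE _ _ (fun i hi => by
        rw [hcB0 i (lt_of_lt_of_le hkr hi)]; ring)
    rw [← hnB, hrestrict, Finset.mul_sum]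
    refine Finset.sum_le_sum fun i _ => ?_
    by_cases hz : cB (Fin.castLE (min_le_left d T) i) = 0
    · simp [hz] <;> positivity
    · have hik : (i : ℕ) ≤ (k : ℕ) := by
        by_contra hcon
        exact hz (hcB0 _ (by simpa using not_le.mp hcon))
      have hts : t k ≤ t i := htB (show i ≤ k from hik)
      exact mul_le_mul_of_nonneg_right (pow_le_pow_left₀ (ht0 k) hts 2) (sq_nonneg _)
  have hUp : (Aᵀ *ᵥ x) ⬝ᵥ (Aᵀ *ᵥ x) ≤ s k ^ 2 * n := by
    rw [svd_quadform hVA hAeq x]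
    have step1 : ∑ i : Fin (min d T), s i ^ 2 * cA (Fin.castLE (min_le_left d T) i) ^ 2
        ≤ ∑ i : Fin (min d T), s k ^ 2 * cA (Fin.castLE (min_le_left d T) i) ^ 2 := by
      refine Finset.sum_le_sum fun i _ => ?_
      by_cases hz : cA (Fin.castLE (min_le_left d T) i) = 0
      · simp [hz] <;> positivity
      · have hki : (k : ℕ) ≤ (i : ℕ) := by
          by_contra hcon
          exact hz (hcA0 _ (by simpa using not_le.mp hcon))
        have hts : s i ≤ s k := hsA (show k ≤ i from hki)
        exact mul_le_mul_of_nonneg_right (pow_le_pow_left₀ (hs0 i) hts 2) (sq_nonneg _)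
    refine le_trans step1 ?_
    rw [← Finset.mul_sum]
    refine mul_le_mul_of_nonneg_left ?_ (sq_nonneg _)
    calc ∑ i : Fin (min d T), cA (Fin.castLE (min_le_left d T) i) ^ 2
        ≤ ∑ i : Fin d, cA i ^ 2 := sum_castLE_le _ _ (fun i => sq_nonneg _)
      _ = n := hnA
  have hfinal : t k ^ 2 * n ≤ s k ^ 2 * n := le_trans hL (le_trans (hq x) hUp)
  have hsq : t k ^ 2 ≤ s k ^ 2 := le_of_mul_le_mul_right hfinal hnpos
  exact (pow_le_pow_iff_left₀ (ht0 k) (hs0 k) two_ne_zero).mp hsq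

lemma thetaNorm_mono {r : ℕ} (Θ : Set (Fin r → ℝ)) (hpos : ∀ θ ∈ Θ, ∀ i, 0 < θ i)
    {t s : Fin r → ℝ} (h0 : ∀ i, 0 ≤ t i) (h : ∀ i, t i ≤ s i) :
    thetaNorm Θ t ≤ thetaNorm Θ s := by
  unfold thetaNorm
  apply Real.sqrt_le_sqrt
  refine ciInf_mono ⟨0, ?_⟩ ?_
  · rintro v ⟨θ, rfl⟩
    exact Finset.sum_nonneg fun i _ => div_nonneg (sq_nonneg _) (hpos θ.1 θ.2 i).le
  · intro θ
    refine Finset.sum_le_sum fun i _ => ?_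
    exact (div_le_div_iff_of_pos_right (hpos θ.1 θ.2 i)).mpr (pow_le_pow_left₀ (h0 i) (h i) 2)

theorem centered_spectral_theta_norm {d T : ℕ} (hT : 0 < T)
    (Θ : Set (Fin (min d T) → ℝ)) (hne : Θ.Nonempty) (hconv : Convex ℝ Θ)
    (hbdd : Bornology.IsBounded Θ) (hpos : ∀ θ ∈ Θ, ∀ i, 0 < θ i)
    (hperm : ∀ σ : Equiv.Perm (Fin (min d T)), ∀ θ ∈ Θ, (θ ∘ σ) ∈ Θ)
    (σfun : Matrix (Fin d) (Fin T) ℝ → (Fin (min d T) → ℝ))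
    (hσ : ∀ W, IsSVD W (σfun W)) (W : Matrix (Fin d) (Fin T) ℝ) :
    IsLeast {x : ℝ | ∃ z : Fin d → ℝ,
        x = thetaNorm Θ (σfun (Matrix.of fun i t => W i t - z i))}
      (thetaNorm Θ (σfun (Matrix.of fun i t => W i t - (∑ s, W i s) / T))) := by
  have hTne : (T : ℝ) ≠ 0 := Nat.cast_ne_zero.mpr hT.ne'
  set B : Matrix (Fin d) (Fin T) ℝ :=
    Matrix.of fun i t => W i t - (∑ s, W i s) / T with hBdef
  constructor
  · exact ⟨fun i => (∑ s, W i s) / T, rfl⟩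
  · rintro v ⟨z, rfl⟩
    set A : Matrix (Fin d) (Fin T) ℝ := Matrix.of fun i t => W i t - z i with hAdef
    refine thetaNorm_mono Θ hpos (fun i => (hσ B).2.1 i) fun i => ?_
    refine sv_le (hσ A) (hσ B) ?_ i
    intro x
    set y : Fin T → ℝ := Aᵀ *ᵥ x with hy
    set m : ℝ := (∑ t, y t) / T with hm
    have hyt : ∀ t, y t = ∑ i, (W i t - z i) * x i := by
      intro t
      simp [hy, hAdef, Matrix.mulVec, dotProduct, Matrix.transpose_apply]
    have hBt : ∀ t, (Bᵀ *ᵥ x) t = ∑ i, (W i t - (∑ s, W i s) / T) * x i := by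
      intro t
      simp [hBdef, Matrix.mulVec, dotProduct, Matrix.transpose_apply]
    have hsum : ∑ t', y t' = ∑ i, ((∑ s, W i s) - T * z i) * x i := by
      simp_rw [hyt]
      rw [Finset.sum_comm]
      refine Finset.sum_congr rfl fun i _ => ?_
      have hcst : ∑ t' : Fin T, (W i t' - z i) = (∑ s, W i s) - T * z i := by
        rw [Finset.sum_sub_distrib, Finset.sum_const, Finset.card_univ, Fintype.card_fin,
          nsmul_eq_mul]
      rw [← Finset.sum_mul, hcst]
    have hBx : ∀ t, (Bᵀ *ᵥ x) t = y t - m := by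
      intro t
      rw [hBt t, hyt t, hm, hsum]
      rw [show (∑ i, ((∑ s, W i s) - (T : ℝ) * z i) * x i) / (T : ℝ)
            = ∑ i, (((∑ s, W i s) - (T : ℝ) * z i) * x i) / (T : ℝ) from Finset.sum_div ..,
        ← Finset.sum_sub_distrib]
      refine Finset.sum_congr rfl fun j _ => ?_
      field_simp
      ring
    have hsumyt : ∑ t', y t' = (T : ℝ) * m := by
      rw [hm]; field_simp
    have hBsq : (Bᵀ *ᵥ x) ⬝ᵥ (Bᵀ *ᵥ x) = ∑ t', (y t' - m) ^ 2 := by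
      rw [dot_self_eq]
      exact Finset.sum_congr rfl fun t' _ => by rw [hBx t']
    have hAsq : (Aᵀ *ᵥ x) ⬝ᵥ (Aᵀ *ᵥ x) = ∑ t', y t' ^ 2 := by
      rw [dot_self_eq]
    rw [hBsq, hAsq]
    have expand : ∑ t', (y t' - m) ^ 2
        = ∑ t', y t' ^ 2 - (2 * m) * (∑ t', y t') + T * m ^ 2 := by
      have hrw : ∀ w : ℝ, (w - m) ^ 2 = w ^ 2 - (2 * m) * w + m ^ 2 := by
        intro w; ring
      simp_rw [hrw]
      rw [Finset.sum_add_distrib, Finset.sum_sub_distrib, ← Finset.mul_sum,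
        Finset.sum_const, Finset.card_univ, Fintype.card_fin, nsmul_eq_mul]
    rw [expand, hsumyt]
    nlinarith [mul_nonneg (Nat.cast_nonneg (α := ℝ) T) (sq_nonneg m)]
end
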